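/- arXiv:2112.05010 — 10 statements merged into one kernel-verified Lean document; each statement's English description precedes it below -/
import Mathlib

section
/- Assume the uncertainty set U_η is nonempty for a given η ≥ 0. Then there exists an assortment S ∈ Ŝ that is optimal for the robust assortment optimization problem: for every S′ ∈ 𝒮, inf_{λ ∈ U_η} R^λ(S′) ≤ inf_{λ ∈ U_η} R^λ(S). -/
namespace RobustAssortment

/-- `i` is the most preferred product of the assortment `S` under the ranking `σ`. -/
def isTop {n : ℕ} (σ : Equiv.Perm (Fin (n + 1))) (S : Finset (Fin (n + 1)))
    (i : Fin (n + 1)) : Prop :=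
  i ∈ S ∧ ∀ j ∈ S, σ i ≤ σ j

instance {n : ℕ} (σ : Equiv.Perm (Fin (n + 1))) (S : Finset (Fin (n + 1)))
    (i : Fin (n + 1)) : Decidable (isTop σ S i) := by
  unfold isTop; infer_instance
/-- A ranking-based choice model: nonnegative weights on rankings summing to one. -/
def IsChoiceModel {n : ℕ} (lam : Equiv.Perm (Fin (n + 1)) → ℝ) : Prop :=
  (∀ σ, 0 ≤ lam σ) ∧ ∑ σ : Equiv.Perm (Fin (n + 1)), lam σ = 1

/-- Choice probability `D^λ_i(S)`. -/
noncomputable def choiceProb {n : ℕ} (lam : Equiv.Perm (Fin (n + 1)) → ℝ)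
    (S : Finset (Fin (n + 1))) (i : Fin (n + 1)) : ℝ :=
  ∑ σ : Equiv.Perm (Fin (n + 1)), if isTop σ S i then lam σ else 0

/-- Expected revenue `R^λ(S)`. -/
noncomputable def expRev {n : ℕ} (r : Fin (n + 1) → ℝ)
    (lam : Equiv.Perm (Fin (n + 1)) → ℝ) (S : Finset (Fin (n + 1))) : ℝ :=
  ∑ i ∈ S, r i * choiceProb lam S i

/-- The uncertainty set `U_η` of choice models consistent with the sales data. -/
def Uset {n M : ℕ} (Sm : Fin M → Finset (Fin (n + 1)))
    (v : Fin M → Fin (n + 1) → ℝ) (η : ℝ) :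
    Set (Equiv.Perm (Fin (n + 1)) → ℝ) :=
  {lam | IsChoiceModel lam ∧
    ∀ m : Fin M, ∀ i ∈ Sm m, |choiceProb lam (Sm m) i - v m i| ≤ η}

/-- Worst-case expected revenue `inf_{λ ∈ U_η} R^λ(S)`. -/
noncomputable def wcRev {n M : ℕ} (Sm : Fin M → Finset (Fin (n + 1)))
    (v : Fin M → Fin (n + 1) → ℝ) (η : ℝ) (r : Fin (n + 1) → ℝ)
    (S : Finset (Fin (n + 1))) : ℝ :=
  sInf {x | ∃ lam ∈ Uset Sm v η, x = expRev r lam S}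
/-- The collection `Ŝ` of candidate assortments. -/
def Shat {n M : ℕ} (Sm : Fin M → Finset (Fin (n + 1))) (r : Fin (n + 1) → ℝ)
    (S : Finset (Fin (n + 1))) : Prop :=
  0 ∈ S ∧ ∀ i' ∈ S, ∀ i : Fin (n + 1), r i' < r i →
    (∀ m : Fin M, i' ∈ Sm m → i ∈ Sm m) → i ∈ S

/-! ### Auxiliary development -/

section Aux
variable {n : ℕ}

lemma isTop_unique (σ : Equiv.Perm (Fin (n + 1))) (T : Finset (Fin (n + 1)))
    {t t' : Fin (n + 1)} (h : isTop σ T t) (h' : isTop σ T t') : t = t' :=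
  σ.injective (le_antisymm (h.2 t' h'.1) (h'.2 t h.1))

lemma exists_isTop (σ : Equiv.Perm (Fin (n + 1))) (T : Finset (Fin (n + 1)))
    (hT : T.Nonempty) : ∃ t, isTop σ T t := by
  obtain ⟨t, ht, h⟩ := T.exists_min_image (fun j => σ j) hT
  exact ⟨t, ht, h⟩

/-- The cycle on ranks: sends `b ↦ a+1` and shifts ranks in `(a,b)` up by one;
this amounts to moving the item of rank `b` to just after the item of rank `a`. -/
def cycf (a b x : ℕ) : ℕ :=
  if x = b ∧ a < b then a + 1 else if a < x ∧ x < b then x + 1 else x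

lemma cycf_lt {m a b x : ℕ} (ha : a < m + 1) (hb : b < m + 1) (hx : x < m + 1) :
    cycf a b x < m + 1 := by unfold cycf; split_ifs <;> omega

lemma cycf_inj {a b x y : ℕ} (h : cycf a b x = cycf a b y) : x = y := by
  unfold cycf at h; split_ifs at h <;> omega

lemma cycf_mono {a b x y : ℕ} (hab : a < b) (hxy : x ≤ y)
    (h : x ≤ a ∨ (x ≠ b ∧ y ≠ b)) : cycf a b x ≤ cycf a b y := by
  unfold cycf; split_ifs <;> omega

lemma cycf_top {a b y : ℕ} (hab : a < b) (hy : a < y) :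
    cycf a b b ≤ cycf a b y := by
  unfold cycf; split_ifs <;> omega

noncomputable def cycPerm (a b : Fin (n + 1)) : Equiv.Perm (Fin (n + 1)) :=
  Equiv.ofBijective (fun x => ⟨cycf a.val b.val x.val, cycf_lt a.isLt b.isLt x.isLt⟩)
    (Finite.injective_iff_bijective.mp fun _ _ h =>
      Fin.ext (cycf_inj (congrArg Fin.val h)))

lemma cycPerm_val (a b x : Fin (n + 1)) :
    (cycPerm a b x).val = cycf a.val b.val x.val := rfl

section Move
variable {σ : Equiv.Perm (Fin (n + 1))} {i istar : Fin (n + 1)}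
  {S : Finset (Fin (n + 1))}

lemma ab_lt (hiS : i ∉ S) (hstar : istar ∈ S)
    (hTop : isTop σ (insert i S) i) : (σ i).val < (σ istar).val := by
  have hne : i ≠ istar := fun h => hiS (h ▸ hstar)
  have h1 : σ i ≤ σ istar := hTop.2 istar (Finset.mem_insert_of_mem hstar)
  have h2 : σ i ≠ σ istar := fun h => hne (σ.injective h)
  exact lt_of_le_of_ne h1 (fun h => h2 (Fin.ext h))

lemma isTop_move_of_isTop (hiS : i ∉ S) (hstar : istar ∈ S)
    (hTop : isTop σ (insert i S) i)
    {T : Finset (Fin (n + 1))} (hT : istar ∈ T → i ∈ T)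
    {t : Fin (n + 1)} (ht : isTop σ T t) :
    isTop (σ.trans (cycPerm (σ i) (σ istar))) T t := by
  have hab := ab_lt hiS hstar hTop
  refine ⟨ht.1, fun k hk => ?_⟩
  simp only [Equiv.trans_apply, Fin.le_def, cycPerm_val]
  refine cycf_mono hab (Fin.le_def.mp (ht.2 k hk)) ?_
  by_cases hT' : istar ∈ T
  · exact Or.inl (Fin.le_def.mp (ht.2 i (hT hT')))
  · refine Or.inr ⟨fun hval => hT' ?_, fun hval => hT' ?_⟩
    · have h : t = istar := σ.injective (Fin.ext hval)
      exact h ▸ ht.1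
    · have h : k = istar := σ.injective (Fin.ext hval)
      exact h ▸ hk

lemma isTop_move_iff (hiS : i ∉ S) (hstar : istar ∈ S)
    (hTop : isTop σ (insert i S) i)
    {T : Finset (Fin (n + 1))} (hT : istar ∈ T → i ∈ T) (j : Fin (n + 1)) :
    isTop (σ.trans (cycPerm (σ i) (σ istar))) T j ↔ isTop σ T j := by
  constructor
  · intro hj
    obtain ⟨t, ht⟩ := exists_isTop σ T ⟨j, hj.1⟩
    have h2 := isTop_move_of_isTop hiS hstar hTop hT ht
    rwa [isTop_unique _ T hj h2]
  · exact isTop_move_of_isTop hiS hstar hTop hT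

lemma isTop_move_istar (hiS : i ∉ S) (hstar : istar ∈ S)
    (hTop : isTop σ (insert i S) i) :
    isTop (σ.trans (cycPerm (σ i) (σ istar))) S istar := by
  have hab := ab_lt hiS hstar hTop
  refine ⟨hstar, fun j hj => ?_⟩
  simp only [Equiv.trans_apply, Fin.le_def, cycPerm_val]
  refine cycf_top hab ?_
  have h1 : σ i ≤ σ j := hTop.2 j (Finset.mem_insert_of_mem hj)
  have h2 : σ i ≠ σ j := fun h => hiS ((σ.injective h) ▸ hj)
  exact lt_of_le_of_ne h1 (fun h => h2 (Fin.ext h))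

end Move

/-- revenue of the top item of `T` under `σ`. -/
noncomputable def topR (r : Fin (n + 1) → ℝ) (σ : Equiv.Perm (Fin (n + 1)))
    (T : Finset (Fin (n + 1))) : ℝ :=
  ∑ j ∈ T, if isTop σ T j then r j else 0

lemma topR_eq (r : Fin (n + 1) → ℝ) (σ : Equiv.Perm (Fin (n + 1)))
    (T : Finset (Fin (n + 1))) {t : Fin (n + 1)} (ht : isTop σ T t) :
    topR r σ T = r t := by
  unfold topR
  rw [Finset.sum_eq_single_of_mem t ht.1]
  · rw [if_pos ht]
  · intro j _ hjt
    exact if_neg (fun h => hjt (isTop_unique σ T h ht))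

lemma push_sum (lam : Equiv.Perm (Fin (n + 1)) → ℝ)
    (g : Equiv.Perm (Fin (n + 1)) → Equiv.Perm (Fin (n + 1)))
    (F : Equiv.Perm (Fin (n + 1)) → ℝ) :
    ∑ τ : Equiv.Perm (Fin (n + 1)),
        (∑ σ : Equiv.Perm (Fin (n + 1)), if g σ = τ then lam σ else 0) * F τ
      = ∑ σ : Equiv.Perm (Fin (n + 1)), lam σ * F (g σ) := by
  classical
  calc ∑ τ : Equiv.Perm (Fin (n + 1)),
        (∑ σ : Equiv.Perm (Fin (n + 1)), if g σ = τ then lam σ else 0) * F τ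
      = ∑ τ : Equiv.Perm (Fin (n + 1)), ∑ σ : Equiv.Perm (Fin (n + 1)),
          if g σ = τ then lam σ * F τ else 0 := by
        refine Finset.sum_congr rfl fun τ _ => ?_
        rw [Finset.sum_mul]
        exact Finset.sum_congr rfl fun σ _ => by split_ifs <;> simp
    _ = ∑ σ : Equiv.Perm (Fin (n + 1)), ∑ τ : Equiv.Perm (Fin (n + 1)),
          if g σ = τ then lam σ * F τ else 0 := Finset.sum_comm
    _ = ∑ σ : Equiv.Perm (Fin (n + 1)), lam σ * F (g σ) := by
        refine Finset.sum_congr rfl fun σ _ => ?_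
        simp

lemma choiceProb_eq_mul (lam : Equiv.Perm (Fin (n + 1)) → ℝ)
    (T : Finset (Fin (n + 1))) (j : Fin (n + 1)) :
    choiceProb lam T j
      = ∑ σ : Equiv.Perm (Fin (n + 1)), lam σ * (if isTop σ T j then 1 else 0) := by
  unfold choiceProb
  exact Finset.sum_congr rfl fun σ _ => by split_ifs <;> simp

lemma expRev_eq (r : Fin (n + 1) → ℝ) (lam : Equiv.Perm (Fin (n + 1)) → ℝ)
    (T : Finset (Fin (n + 1))) :
    expRev r lam T = ∑ σ : Equiv.Perm (Fin (n + 1)), lam σ * topR r σ T := by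
  unfold expRev choiceProb topR
  calc ∑ j ∈ T, r j * ∑ σ : Equiv.Perm (Fin (n + 1)), (if isTop σ T j then lam σ else 0)
      = ∑ j ∈ T, ∑ σ : Equiv.Perm (Fin (n + 1)),
          (if isTop σ T j then lam σ * r j else 0) := by
        refine Finset.sum_congr rfl fun j _ => ?_
        rw [Finset.mul_sum]
        exact Finset.sum_congr rfl fun σ _ => by split_ifs <;> ring
    _ = ∑ σ : Equiv.Perm (Fin (n + 1)), ∑ j ∈ T,
          (if isTop σ T j then lam σ * r j else 0) := Finset.sum_comm
    _ = ∑ σ : Equiv.Perm (Fin (n + 1)), lam σ * ∑ j ∈ T, (if isTop σ T j then r j else 0) := by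
        refine Finset.sum_congr rfl fun σ _ => ?_
        rw [Finset.mul_sum]
        exact Finset.sum_congr rfl fun j _ => by split_ifs <;> ring

lemma expRev_nonneg (r : Fin (n + 1) → ℝ) (hrnn : ∀ j, 0 ≤ r j)
    (lam : Equiv.Perm (Fin (n + 1)) → ℝ) (hlam : ∀ σ, 0 ≤ lam σ)
    (T : Finset (Fin (n + 1))) : 0 ≤ expRev r lam T := by
  refine Finset.sum_nonneg fun j _ => mul_nonneg (hrnn j) ?_
  refine Finset.sum_nonneg fun σ _ => ?_
  split_ifs
  · exact hlam σ
  · exact le_refl 0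

/-- The key exchange lemma: pushing forward `lam` along the ranking modification
yields a model in the uncertainty set with no larger revenue on `S` than
the revenue of `lam` on `insert i S`. -/
lemma key_exchange {n M : ℕ} (r : Fin (n + 1) → ℝ)
    (Sm : Fin M → Finset (Fin (n + 1))) (v : Fin M → Fin (n + 1) → ℝ) (η : ℝ)
    (S : Finset (Fin (n + 1))) (i istar : Fin (n + 1))
    (hiS : i ∉ S) (hstar : istar ∈ S) (hri : r istar ≤ r i)
    (hM : ∀ m, istar ∈ Sm m → i ∈ Sm m)
    (lam : Equiv.Perm (Fin (n + 1)) → ℝ) (hlam : lam ∈ Uset Sm v η) :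
    ∃ lam' ∈ Uset Sm v η, expRev r lam' S ≤ expRev r lam (insert i S) := by
  classical
  set g : Equiv.Perm (Fin (n + 1)) → Equiv.Perm (Fin (n + 1)) :=
    fun σ => if isTop σ (insert i S) i then σ.trans (cycPerm (σ i) (σ istar)) else σ
    with hg
  set lam' : Equiv.Perm (Fin (n + 1)) → ℝ :=
    fun τ => ∑ σ : Equiv.Perm (Fin (n + 1)), if g σ = τ then lam σ else 0 with hlam'
  have hpush : ∀ F : Equiv.Perm (Fin (n + 1)) → ℝ,
      ∑ τ : Equiv.Perm (Fin (n + 1)), lam' τ * F τ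
        = ∑ σ : Equiv.Perm (Fin (n + 1)), lam σ * F (g σ) := fun F => push_sum lam g F
  have hcm : IsChoiceModel lam' := by
    constructor
    · intro τ
      refine Finset.sum_nonneg fun σ _ => ?_
      split_ifs
      · exact hlam.1.1 σ
      · exact le_refl 0
    · calc ∑ τ : Equiv.Perm (Fin (n + 1)), lam' τ
          = ∑ τ : Equiv.Perm (Fin (n + 1)), lam' τ * (fun _ => (1:ℝ)) τ := by simp
        _ = ∑ σ : Equiv.Perm (Fin (n + 1)), lam σ * (fun _ => (1:ℝ)) (g σ) := hpush _
        _ = 1 := by simpa using hlam.1.2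
  have hprob : ∀ (T : Finset (Fin (n + 1))), (istar ∈ T → i ∈ T) →
      ∀ j, choiceProb lam' T j = choiceProb lam T j := by
    intro T hT j
    have htops : ∀ σ : Equiv.Perm (Fin (n + 1)), isTop (g σ) T j ↔ isTop σ T j := by
      intro σ
      by_cases hσ : isTop σ (insert i S) i
      · rw [hg]; simp only [if_pos hσ]
        exact isTop_move_iff hiS hstar hσ hT j
      · rw [hg]; simp only [if_neg hσ]
    calc choiceProb lam' T j
        = ∑ σ : Equiv.Perm (Fin (n + 1)), lam σ * (if isTop (g σ) T j then 1 else 0) := by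
          rw [choiceProb_eq_mul]; exact hpush _
      _ = ∑ σ : Equiv.Perm (Fin (n + 1)), lam σ * (if isTop σ T j then 1 else 0) :=
          Finset.sum_congr rfl fun σ _ => by simp only [htops σ]
      _ = choiceProb lam T j := (choiceProb_eq_mul lam T j).symm
  refine ⟨lam', ⟨hcm, fun m j hj => ?_⟩, ?_⟩
  · rw [hprob (Sm m) (hM m) j]
    exact hlam.2 m j hj
  · calc expRev r lam' S
        = ∑ σ : Equiv.Perm (Fin (n + 1)), lam σ * topR r (g σ) S := by
          rw [expRev_eq]; exact hpush _
      _ ≤ ∑ σ : Equiv.Perm (Fin (n + 1)), lam σ * topR r σ (insert i S) := by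
          refine Finset.sum_le_sum fun σ _ => ?_
          by_cases hσ : isTop σ (insert i S) i
          · rw [hg]; simp only [if_pos hσ]
            rw [topR_eq r _ S (isTop_move_istar hiS hstar hσ), topR_eq r σ _ hσ]
            exact mul_le_mul_of_nonneg_left hri (hlam.1.1 σ)
          · rw [hg]; simp only [if_neg hσ]
            obtain ⟨t, ht⟩ := exists_isTop σ (insert i S) ⟨i, Finset.mem_insert_self i S⟩
            have hti : t ≠ i := fun h => hσ (h ▸ ht)
            have htS : t ∈ S := Finset.mem_of_mem_insert_of_ne ht.1 hti
            have htop : isTop σ S t :=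
              ⟨htS, fun k hk => ht.2 k (Finset.mem_insert_of_mem hk)⟩
            rw [topR_eq r σ S htop, topR_eq r σ _ ht]
      _ = expRev r lam (insert i S) := (expRev_eq r lam (insert i S)).symm

lemma wcRev_insert_le {n M : ℕ} (r : Fin (n + 1) → ℝ) (hrnn : ∀ j, 0 ≤ r j)
    (Sm : Fin M → Finset (Fin (n + 1))) (v : Fin M → Fin (n + 1) → ℝ) (η : ℝ)
    (hU : (Uset Sm v η).Nonempty)
    (S : Finset (Fin (n + 1))) (i istar : Fin (n + 1))
    (hiS : i ∉ S) (hstar : istar ∈ S) (hri : r istar ≤ r i)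
    (hM : ∀ m, istar ∈ Sm m → i ∈ Sm m) :
    wcRev Sm v η r S ≤ wcRev Sm v η r (insert i S) := by
  have hbdd : BddBelow {x | ∃ lam ∈ Uset Sm v η, x = expRev r lam S} := by
    refine ⟨0, fun x hx => ?_⟩
    obtain ⟨lam, hlam, rfl⟩ := hx
    exact expRev_nonneg r hrnn lam hlam.1.1 S
  unfold wcRev
  refine le_csInf ?_ ?_
  · obtain ⟨lam, hlam⟩ := hU
    exact ⟨_, lam, hlam, rfl⟩
  · rintro x ⟨lam, hlam, rfl⟩
    obtain ⟨lam', hlam', hle⟩ :=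
      key_exchange r Sm v η S i istar hiS hstar hri hM lam hlam
    exact le_trans (csInf_le hbdd ⟨lam', hlam', rfl⟩) hle

end Aux

/-- Theorem 1 of the paper: there is an optimal assortment for the robust problem in `Ŝ`. -/
theorem statement0 (n M : ℕ) (hn : 1 ≤ n) (hM : 1 ≤ M)
    (r : Fin (n + 1) → ℝ) (hr0 : r 0 = 0) (hr : StrictMono r)
    (Sm : Fin M → Finset (Fin (n + 1))) (hSm0 : ∀ m, (0 : Fin (n + 1)) ∈ Sm m)
    (v : Fin M → Fin (n + 1) → ℝ) (η : ℝ) (hη : 0 ≤ η)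
    (hU : (Uset Sm v η).Nonempty) :
    ∃ S : Finset (Fin (n + 1)), Shat Sm r S ∧
      ∀ S' : Finset (Fin (n + 1)), 0 ∈ S' →
        wcRev Sm v η r S' ≤ wcRev Sm v η r S := by
  classical
  have hrnn : ∀ j, 0 ≤ r j := fun j => hr0 ▸ hr.monotone (Fin.zero_le j)
  set W : Finset (Fin (n + 1)) → ℝ := wcRev Sm v η r with hW
  set A : Finset (Finset (Fin (n + 1))) :=
    Finset.univ.filter (fun S => (0 : Fin (n + 1)) ∈ S) with hA
  have hAmem : ∀ S : Finset (Fin (n + 1)), S ∈ A ↔ (0 : Fin (n + 1)) ∈ S := by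
    intro S; simp [hA]
  have hAne : A.Nonempty := ⟨{0}, (hAmem {0}).mpr (Finset.mem_singleton_self 0)⟩
  obtain ⟨S₀, hS₀A, hS₀max⟩ := A.exists_max_image W hAne
  set B : Finset (Finset (Fin (n + 1))) :=
    A.filter (fun S => ∀ S' ∈ A, W S' ≤ W S) with hB
  have hBne : B.Nonempty := ⟨S₀, Finset.mem_filter.mpr ⟨hS₀A, hS₀max⟩⟩
  obtain ⟨S, hSB, hScard⟩ := B.exists_max_image (fun S => S.card) hBne
  obtain ⟨hSA, hSmax⟩ := Finset.mem_filter.mp hSB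
  have hS0 : (0 : Fin (n + 1)) ∈ S := (hAmem S).mp hSA
  refine ⟨S, ⟨hS0, ?_⟩, fun S' h0' => hSmax S' ((hAmem S').mpr h0')⟩
  intro i' hi' i hlt hMsub
  by_contra hiS
  have hWle : W S ≤ W (insert i S) :=
    wcRev_insert_le r hrnn Sm v η hU S i i' hiS hi' (le_of_lt hlt) hMsub
  have hmem : insert i S ∈ B := by
    refine Finset.mem_filter.mpr ⟨(hAmem _).mpr (Finset.mem_insert_of_mem hS0), ?_⟩
    intro S' hS'
    exact le_trans (hSmax S' hS') hWle
  have hcard := hScard (insert i S) hmem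
  rw [Finset.card_insert_of_notMem hiS] at hcard
  omega

end RobustAssortment
end

section
/- Let η ≥ 0, assume the uncertainty set U_η is nonempty, and let S ∈ 𝒮. Then inf_{λ ∈ U_η} R^λ(S) equals the infimum of Σ_{(i_1,…,i_M) ∈ L} ρ_{i_1⋯i_M}(S)·μ(i_1,…,i_M) over all functions μ : L → ℝ satisfying: μ(t) ≥ 0 for all t ∈ L; Σ_{t ∈ L} μ(t) = 1; and |Σ_{t ∈ L : t_m = i} μ(t) − v_{m,i}| ≤ η for every m ∈ {1,…,M} and every i ∈ S_m. -/
/-!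
A choice model `λ` induces weights on `L` by pushing it forward along
`σ ↦ (σ-top of S_m)_m`; this keeps the sales marginals and can only lower the revenue, since
`ρ_t(S)` is the least revenue among the `S`-tops of rankings realising `t`. Conversely, weights
`μ` on `L` lift to a choice model by sending each tuple `t` to a ranking that realises `t` and
attains `ρ_t(S)`; this has the same marginals and revenue exactly `∑ ρ_t(S) μ(t)`. Hence every
value of either problem dominates a value of the other, and the two infima coincide.
-/

namespace RobustAssortment

/-- Membership in the set `L` of tuples of products compatible with a common ranking. -/
def memL {n M : ℕ} (Sm : Fin M → Finset (Fin (n + 1)))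
    (t : Fin M → Fin (n + 1)) : Prop :=
  ∃ σ : Equiv.Perm (Fin (n + 1)), ∀ m : Fin M, isTop σ (Sm m) (t m)

instance {n M : ℕ} (Sm : Fin M → Finset (Fin (n + 1))) (t : Fin M → Fin (n + 1)) :
    Decidable (memL Sm t) := by
  unfold memL; infer_instance
/-- The quantity `ρ_{i_1⋯i_M}(S)`: the minimum revenue among products of `S` that can be
the top of `S` under a ranking corresponding to the tuple `t`. -/
noncomputable def rho {n M : ℕ} (Sm : Fin M → Finset (Fin (n + 1)))
    (r : Fin (n + 1) → ℝ) (t : Fin M → Fin (n + 1)) (S : Finset (Fin (n + 1))) : ℝ :=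
  sInf {x | ∃ i ∈ S, (∃ σ : Equiv.Perm (Fin (n + 1)),
    (∀ m : Fin M, isTop σ (Sm m) (t m)) ∧ isTop σ S i) ∧ x = r i}

open Finset

section Pushforward

variable {α β R : Type*} [DecidableEq β]

def pushforward [AddCommMonoid R] (s : Finset α) (f : α → β) (w : α → R) (b : β) : R :=
  ∑ a ∈ s with f a = b, w a

variable {s : Finset α} {f : α → β}

lemma pushforward_nonneg [AddCommMonoid R] [PartialOrder R] [IsOrderedAddMonoid R] {w : α → R}
    (hw : ∀ a ∈ s, 0 ≤ w a) (b : β) : 0 ≤ pushforward s f w b :=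
  sum_nonneg fun a ha => hw a (mem_filter.1 ha).1

lemma sum_pushforward [AddCommMonoid R] {w : α → R} (t : Finset β) :
    ∑ b ∈ t, pushforward s f w b = ∑ a ∈ s with f a ∈ t, w a :=
  sum_fiberwise_eq_sum_filter s t f w

lemma sum_mul_pushforward [NonUnitalNonAssocSemiring R] {w : α → R} (t : Finset β) (g : β → R) :
    ∑ b ∈ t, g b * pushforward s f w b = ∑ a ∈ s with f a ∈ t, g (f a) * w a := by
  rw [← sum_fiberwise_eq_sum_filter]
  refine sum_congr rfl fun b _ => ?_
  rw [pushforward, mul_sum]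
  exact sum_congr rfl fun a ha => by rw [(mem_filter.1 ha).2]

end Pushforward

section Rankings

variable {n : ℕ} {σ : Equiv.Perm (Fin (n + 1))} {S : Finset (Fin (n + 1))}

lemma isTop.unique {i j : Fin (n + 1)} (hi : isTop σ S i) (hj : isTop σ S j) : i = j :=
  σ.injective (le_antisymm (hi.2 j hj.1) (hj.2 i hi.1))

/-- The `σ`-top of `S`, with the junk value `0` when `S` is empty. -/
noncomputable def topOf (σ : Equiv.Perm (Fin (n + 1))) (S : Finset (Fin (n + 1))) :
    Fin (n + 1) :=
  if h : S.Nonempty then (S.exists_min_image σ h).choose else 0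

lemma isTop_topOf (hS : S.Nonempty) : isTop σ S (topOf σ S) := by
  rw [topOf, dif_pos hS]
  exact (S.exists_min_image σ hS).choose_spec

lemma isTop_iff_topOf_eq (hS : S.Nonempty) {i : Fin (n + 1)} : isTop σ S i ↔ topOf σ S = i :=
  ⟨(isTop_topOf hS).unique, fun h => h ▸ isTop_topOf hS⟩

lemma choiceProb_eq_pushforward (hS : S.Nonempty) (lam : Equiv.Perm (Fin (n + 1)) → ℝ) :
    choiceProb lam S = pushforward univ (topOf · S) lam := by
  ext i
  rw [choiceProb, pushforward, sum_filter]
  exact sum_congr rfl fun σ _ => if_congr (isTop_iff_topOf_eq hS) rfl rfl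

lemma expRev_eq_sum_topOf (hS : S.Nonempty) (r : Fin (n + 1) → ℝ)
    (lam : Equiv.Perm (Fin (n + 1)) → ℝ) :
    expRev r lam S = ∑ σ, r (topOf σ S) * lam σ := by
  rw [expRev, choiceProb_eq_pushforward hS, sum_mul_pushforward,
    filter_true_of_mem fun σ _ => (isTop_topOf hS).1]

end Rankings

section Tuples

variable {n M : ℕ} (Sm : Fin M → Finset (Fin (n + 1)))

noncomputable def topTuple (σ : Equiv.Perm (Fin (n + 1))) : Fin M → Fin (n + 1) :=
  fun m => topOf σ (Sm m)

variable {Sm}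

lemma memL_topTuple (hSm : ∀ m, (Sm m).Nonempty) (σ : Equiv.Perm (Fin (n + 1))) :
    memL Sm (topTuple Sm σ) :=
  ⟨σ, fun m => isTop_topOf (hSm m)⟩

lemma finite_setOf_exists_mem_and_eq {ι : Type*} [Finite ι] (r : ι → ℝ) (S : Finset ι)
    (P : ι → Prop) : {x | ∃ i ∈ S, P i ∧ x = r i}.Finite :=
  (Set.finite_range r).subset fun _ ⟨i, _, _, hx⟩ => ⟨i, hx.symm⟩

variable {r : Fin (n + 1) → ℝ} {S : Finset (Fin (n + 1))} {t : Fin M → Fin (n + 1)}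

lemma rho_le (hS : S.Nonempty) {σ : Equiv.Perm (Fin (n + 1))}
    (hσ : ∀ m, isTop σ (Sm m) (t m)) : rho Sm r t S ≤ r (topOf σ S) :=
  csInf_le (finite_setOf_exists_mem_and_eq r S _).bddBelow
    ⟨topOf σ S, (isTop_topOf hS).1, ⟨σ, hσ, isTop_topOf hS⟩, rfl⟩

lemma exists_rho_eq (hS : S.Nonempty) (ht : memL Sm t) :
    ∃ σ, (∀ m, isTop σ (Sm m) (t m)) ∧ rho Sm r t S = r (topOf σ S) := by
  obtain ⟨σ₀, hσ₀⟩ := ht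
  have hne : {x | ∃ i ∈ S, (∃ σ : Equiv.Perm (Fin (n + 1)),
      (∀ m : Fin M, isTop σ (Sm m) (t m)) ∧ isTop σ S i) ∧ x = r i}.Nonempty :=
    ⟨_, topOf σ₀ S, (isTop_topOf hS).1, ⟨σ₀, hσ₀, isTop_topOf hS⟩, rfl⟩
  obtain ⟨i, -, ⟨σ, hσ, hi⟩, hx⟩ :=
    hne.csInf_mem (finite_setOf_exists_mem_and_eq r S _)
  exact ⟨σ, hσ, by rw [rho, hx, (isTop_iff_topOf_eq hS).1 hi]⟩

end Tuples

section LP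

variable {n M : ℕ} {Sm : Fin M → Finset (Fin (n + 1))} {v : Fin M → Fin (n + 1) → ℝ} {η : ℝ}
  {r : Fin (n + 1) → ℝ} {S : Finset (Fin (n + 1))}

def IsLPFeasible (Sm : Fin M → Finset (Fin (n + 1))) (v : Fin M → Fin (n + 1) → ℝ) (η : ℝ)
    (μ : (Fin M → Fin (n + 1)) → ℝ) : Prop :=
  (∀ t, memL Sm t → 0 ≤ μ t) ∧ (∑ t with memL Sm t, μ t) = 1 ∧
    ∀ m, ∀ i ∈ Sm m, |(∑ t with memL Sm t ∧ t m = i, μ t) - v m i| ≤ η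

noncomputable def lpValue (Sm : Fin M → Finset (Fin (n + 1))) (r : Fin (n + 1) → ℝ)
    (S : Finset (Fin (n + 1))) (μ : (Fin M → Fin (n + 1)) → ℝ) : ℝ :=
  ∑ t with memL Sm t, rho Sm r t S * μ t

lemma exists_isLPFeasible_lpValue_le (hS : S.Nonempty) (hSm : ∀ m, (Sm m).Nonempty)
    {lam : Equiv.Perm (Fin (n + 1)) → ℝ} (hlam : lam ∈ Uset Sm v η) :
    ∃ μ, IsLPFeasible Sm v η μ ∧ lpValue Sm r S μ ≤ expRev r lam S := by
  obtain ⟨⟨hlam_nonneg, hlam_sum⟩, hlam_cons⟩ := hlam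
  have hL : ∀ σ, topTuple Sm σ ∈ ({t | memL Sm t} : Finset _) := fun σ =>
    mem_filter.2 ⟨mem_univ _, memL_topTuple hSm σ⟩
  refine ⟨pushforward univ (topTuple Sm) lam,
    ⟨fun t _ => pushforward_nonneg (fun σ _ => hlam_nonneg σ) t, ?_, fun m i hi => ?_⟩, ?_⟩
  · simp only [sum_pushforward, hL, filter_true, hlam_sum]
  · convert hlam_cons m i hi using 3
    rw [sum_pushforward, choiceProb_eq_pushforward (hSm m), pushforward]
    refine sum_congr (filter_congr fun σ _ => ?_) fun _ _ => rfl
    simp [topTuple, memL_topTuple hSm]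
  · simp only [lpValue, sum_mul_pushforward, hL, filter_true, expRev_eq_sum_topOf hS]
    exact sum_le_sum fun σ _ =>
      mul_le_mul_of_nonneg_right (rho_le hS fun m => isTop_topOf (hSm m)) (hlam_nonneg σ)

lemma exists_mem_Uset_expRev_eq (hS : S.Nonempty) (hSm : ∀ m, (Sm m).Nonempty)
    {μ : (Fin M → Fin (n + 1)) → ℝ} (hμ : IsLPFeasible Sm v η μ) :
    ∃ lam ∈ Uset Sm v η, expRev r lam S = lpValue Sm r S μ := by
  obtain ⟨hμ_nonneg, hμ_sum, hμ_cons⟩ := hμ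
  choose! st hst using fun t (ht : memL Sm t) => exists_rho_eq (r := r) hS ht
  set L : Finset (Fin M → Fin (n + 1)) := {t | memL Sm t}
  have hmemL : ∀ t ∈ L, memL Sm t := fun t ht => (mem_filter.1 ht).2
  refine ⟨pushforward L st μ, ⟨⟨pushforward_nonneg fun t ht => hμ_nonneg t (hmemL t ht), ?_⟩,
    fun m i hi => ?_⟩, ?_⟩
  · simp only [sum_pushforward, mem_univ, filter_true, hμ_sum]
  · convert hμ_cons m i hi using 3
    rw [choiceProb_eq_pushforward (hSm m), pushforward, sum_pushforward, filter_filter]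
    refine sum_congr (filter_congr fun t _ => ?_) fun _ _ => rfl
    rw [mem_filter, and_congr_right_iff]
    exact fun ht => by rw [(isTop_iff_topOf_eq (hSm m)).1 ((hst t ht).1 m)]; simp
  · simp only [expRev_eq_sum_topOf hS, sum_mul_pushforward, mem_univ, filter_true, lpValue]
    exact sum_congr rfl fun t ht => by rw [(hst t (hmemL t ht)).2]

end LP

theorem statement1_general (n M : ℕ) (r : Fin (n + 1) → ℝ)
    (Sm : Fin M → Finset (Fin (n + 1))) (hSm0 : ∀ m, (0 : Fin (n + 1)) ∈ Sm m)
    (v : Fin M → Fin (n + 1) → ℝ) (η : ℝ)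
    (S : Finset (Fin (n + 1))) (hS : 0 ∈ S) :
    wcRev Sm v η r S =
      sInf {x : ℝ | ∃ μ : (Fin M → Fin (n + 1)) → ℝ,
        (∀ t, memL Sm t → 0 ≤ μ t) ∧
        (∑ t ∈ Finset.univ.filter (fun t : Fin M → Fin (n + 1) => memL Sm t), μ t) = 1 ∧
        (∀ m : Fin M, ∀ i ∈ Sm m,
          |(∑ t ∈ Finset.univ.filter
              (fun t : Fin M → Fin (n + 1) => memL Sm t ∧ t m = i), μ t) - v m i| ≤ η) ∧
        x = ∑ t ∈ Finset.univ.filter (fun t : Fin M → Fin (n + 1) => memL Sm t),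
              rho Sm r t S * μ t} := by
  have hSne : S.Nonempty := ⟨0, hS⟩
  have hSm : ∀ m, (Sm m).Nonempty := fun m => ⟨0, hSm0 m⟩
  refine csInf_eq_csInf_of_forall_exists_le ?_ ?_
  · rintro _ ⟨lam, hlam, rfl⟩
    obtain ⟨μ, hμ, hle⟩ := exists_isLPFeasible_lpValue_le (r := r) hSne hSm hlam
    exact ⟨_, ⟨μ, hμ.1, hμ.2.1, hμ.2.2, rfl⟩, hle⟩
  · rintro _ ⟨μ, hμ_nonneg, hμ_sum, hμ_cons, rfl⟩
    obtain ⟨lam, hlam, heq⟩ :=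
      exists_mem_Uset_expRev_eq (r := r) hSne hSm ⟨hμ_nonneg, hμ_sum, hμ_cons⟩
    exact ⟨_, ⟨lam, hlam, rfl⟩, heq.le⟩

/-- Proposition 1 of the paper: the worst-case expected revenue of a fixed assortment is the
value of a finite-dimensional optimization problem over weights on the tuples in `L`. -/
theorem statement1 (n M : ℕ) (hn : 1 ≤ n) (hM : 1 ≤ M)
    (r : Fin (n + 1) → ℝ) (hr0 : r 0 = 0) (hr : StrictMono r)
    (Sm : Fin M → Finset (Fin (n + 1))) (hSm0 : ∀ m, (0 : Fin (n + 1)) ∈ Sm m)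
    (v : Fin M → Fin (n + 1) → ℝ) (η : ℝ) (hη : 0 ≤ η)
    (hU : (Uset Sm v η).Nonempty)
    (S : Finset (Fin (n + 1))) (hS : 0 ∈ S) :
    wcRev Sm v η r S =
      sInf {x : ℝ | ∃ μ : (Fin M → Fin (n + 1)) → ℝ,
        (∀ t, memL Sm t → 0 ≤ μ t) ∧
        (∑ t ∈ Finset.univ.filter (fun t : Fin M → Fin (n + 1) => memL Sm t), μ t) = 1 ∧
        (∀ m : Fin M, ∀ i ∈ Sm m,
          |(∑ t ∈ Finset.univ.filter
              (fun t : Fin M → Fin (n + 1) => memL Sm t ∧ t m = i), μ t) - v m i| ≤ η) ∧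
        x = ∑ t ∈ Finset.univ.filter (fun t : Fin M → Fin (n + 1) => memL Sm t),
              rho Sm r t S * μ t} :=
  statement1_general n M r Sm hSm0 v η S hS

end RobustAssortment
end

section
/- For every assortment S ∈ 𝒮 there exists an assortment S′ ∈ Ŝ such that ρ_{i_1⋯i_M}(S) ≤ ρ_{i_1⋯i_M}(S′) for every tuple (i_1,…,i_M) ∈ L. -/
/-!
Replace `S` by its closure `S'` under domination: `i` is added whenever some `i' ∈ S` has
`r i' ≤ r i` and is offered in no past assortment without `i`. This closure lies in `Ŝ`.
If a ranking `τ` compatible with the tuple `t` picks `i ∉ S` as the top of `S'`, take the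
witness `i' ∈ S` and move it to the position right after `i`: every past assortment containing
`i'` also contains `i`, which `τ` ranks no higher than its top, so the tops of the past
assortments do not change, while `i'` becomes the top of `S`. Hence every revenue attained on
`S'` is bounded below by one attained on `S`.
-/

namespace RobustAssortment

theorem exists_perm_le_iff_of_injective {N : ℕ} {β : Type*} [LinearOrder β] (g : Fin N → β)
    (hg : Function.Injective g) : ∃ σ : Equiv.Perm (Fin N), ∀ a b, σ a ≤ σ b ↔ g a ≤ g b := by
  classical
  have hcard : (Finset.univ.image g).card = N := by
    rw [Finset.card_image_of_injective _ hg, Finset.card_univ, Fintype.card_fin]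
  let e := (Finset.univ.image g).orderIsoOfFin hcard
  let f : Fin N → Fin N := fun j => e.symm ⟨g j, Finset.mem_image_of_mem g (Finset.mem_univ j)⟩
  have hf : Function.Injective f := fun a b hab => hg (Subtype.mk_eq_mk.mp (e.symm.injective hab))
  refine ⟨Equiv.ofBijective f (Finite.injective_iff_bijective.mp hf), fun a b => ?_⟩
  exact e.symm.le_iff_le.trans Subtype.mk_le_mk

/-- The ranking `τ` with `i'` moved to the position right after `i`. -/
theorem exists_perm_moveAfter {N : ℕ} (τ : Equiv.Perm (Fin N)) (i i' : Fin N) :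
    ∃ σ : Equiv.Perm (Fin N),
      (∀ a b, a ≠ i' → b ≠ i' → (σ a ≤ σ b ↔ τ a ≤ τ b)) ∧
      (∀ a, a ≠ i' → (σ a ≤ σ i' ↔ τ a ≤ τ i)) ∧
      (∀ b, b ≠ i' → (σ i' ≤ σ b ↔ τ i < τ b)) := by
  classical
  let g : Fin N → ℕ := fun j => if j = i' then 2 * τ i + 1 else 2 * τ j
  have hg : Function.Injective g := by
    intro a b hab
    by_cases ha : a = i' <;> by_cases hb : b = i'
    · exact ha.trans hb.symm
    all_goals simp only [g, ha, hb, if_true, if_false] at hab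
    all_goals first | omega | exact τ.injective (Fin.ext (by omega))
  obtain ⟨σ, hσ⟩ := exists_perm_le_iff_of_injective g hg
  refine ⟨σ, fun a b ha hb => ?_, fun a ha => ?_, fun b hb => ?_⟩
  · simp only [hσ, g, ha, hb, if_false, Fin.le_def]; omega
  · simp only [hσ, g, ha, if_true, if_false, Fin.le_def]; omega
  · simp only [hσ, g, hb, if_true, if_false, Fin.lt_def]; omega

theorem exists_isTop_s2 {n : ℕ} (σ : Equiv.Perm (Fin (n + 1))) {S : Finset (Fin (n + 1))}
    (hS : S.Nonempty) : ∃ i, isTop σ S i := by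
  obtain ⟨i, hi, hmin⟩ := S.exists_min_image σ hS
  exact ⟨i, hi, hmin⟩

theorem isTop.of_subset {n : ℕ} {σ : Equiv.Perm (Fin (n + 1))} {S T : Finset (Fin (n + 1))}
    {i : Fin (n + 1)} (h : isTop σ T i) (hST : S ⊆ T) (hi : i ∈ S) : isTop σ S i :=
  ⟨hi, fun j hj => h.2 j (hST hj)⟩

section

variable {n M : ℕ} (Sm : Fin M → Finset (Fin (n + 1))) (r : Fin (n + 1) → ℝ)

def IsCompatibleTop (t : Fin M → Fin (n + 1)) (S : Finset (Fin (n + 1))) (i : Fin (n + 1)) :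
    Prop :=
  ∃ σ : Equiv.Perm (Fin (n + 1)), (∀ m, isTop σ (Sm m) (t m)) ∧ isTop σ S i

theorem rho_le_rho_of_forall_exists {t : Fin M → Fin (n + 1)} {S S' : Finset (Fin (n + 1))}
    (hne : ∃ i, IsCompatibleTop Sm t S' i)
    (h : ∀ i, IsCompatibleTop Sm t S' i → ∃ i', IsCompatibleTop Sm t S i' ∧ r i' ≤ r i) :
    rho Sm r t S ≤ rho Sm r t S' := by
  have hbdd : BddBelow {x | ∃ i ∈ S, IsCompatibleTop Sm t S i ∧ x = r i} :=
    (Set.finite_range r).bddBelow.mono (by rintro _ ⟨i, -, -, rfl⟩; exact ⟨i, rfl⟩)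
  obtain ⟨i₀, hi₀⟩ := hne
  refine le_csInf ⟨r i₀, i₀, hi₀.choose_spec.2.1, hi₀, rfl⟩ ?_
  rintro _ ⟨i, -, hi, rfl⟩
  obtain ⟨i', hi', hle⟩ := h i hi
  exact (csInf_le hbdd ⟨i', hi'.choose_spec.2.1, hi', rfl⟩).trans hle

def Dominates (i i' : Fin (n + 1)) : Prop :=
  r i' ≤ r i ∧ ∀ m, i' ∈ Sm m → i ∈ Sm m

theorem Dominates.refl (i : Fin (n + 1)) : Dominates Sm r i i :=
  ⟨le_rfl, fun _ h => h⟩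

theorem Dominates.trans {i i' i'' : Fin (n + 1)} (h : Dominates Sm r i i')
    (h' : Dominates Sm r i' i'') : Dominates Sm r i i'' :=
  ⟨h'.1.trans h.1, fun m hm => h.2 m (h'.2 m hm)⟩

open Classical in
noncomputable def dominationClosure (S : Finset (Fin (n + 1))) : Finset (Fin (n + 1)) :=
  Finset.univ.filter fun i => ∃ i' ∈ S, Dominates Sm r i i'

variable {Sm r}

theorem mem_dominationClosure {S : Finset (Fin (n + 1))} {i : Fin (n + 1)} :
    i ∈ dominationClosure Sm r S ↔ ∃ i' ∈ S, Dominates Sm r i i' := by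
  simp [dominationClosure]

theorem subset_dominationClosure (S : Finset (Fin (n + 1))) :
    S ⊆ dominationClosure Sm r S :=
  fun i hi => mem_dominationClosure.mpr ⟨i, hi, Dominates.refl Sm r i⟩

theorem shat_dominationClosure {S : Finset (Fin (n + 1))} (hS : 0 ∈ S) :
    Shat Sm r (dominationClosure Sm r S) := by
  refine ⟨subset_dominationClosure S hS, fun i' hi' i hlt hincl => ?_⟩
  obtain ⟨i₀, hi₀, hdom⟩ := mem_dominationClosure.mp hi'
  exact mem_dominationClosure.mpr ⟨i₀, hi₀, Dominates.trans Sm r ⟨hlt.le, hincl⟩ hdom⟩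

theorem exists_compatibleTop_dominated {t : Fin M → Fin (n + 1)} {S : Finset (Fin (n + 1))}
    {i : Fin (n + 1)} (hi : IsCompatibleTop Sm t (dominationClosure Sm r S) i) :
    ∃ i', IsCompatibleTop Sm t S i' ∧ r i' ≤ r i := by
  obtain ⟨τ, hτ, hiTop⟩ := hi
  have hsub := subset_dominationClosure (Sm := Sm) (r := r) S
  by_cases hiS : i ∈ S
  · exact ⟨i, ⟨τ, hτ, hiTop.of_subset hsub hiS⟩, le_rfl⟩
  obtain ⟨i', hi'S, hri', hincl⟩ := mem_dominationClosure.mp hiTop.1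
  obtain ⟨σ, hσ, hσ_to, hσ_from⟩ := exists_perm_moveAfter τ i i'
  have hbelow : ∀ j ∈ S, τ i < τ j := fun j hj =>
    (hiTop.2 j (hsub hj)).lt_of_ne fun h => hiS (τ.injective h ▸ hj)
  have htm : ∀ m, t m ≠ i' := by
    rintro m h
    have hi'm : i' ∈ Sm m := h ▸ (hτ m).1
    exact (hbelow i' hi'S).not_ge (h ▸ (hτ m).2 i (hincl m hi'm))
  refine ⟨i', ⟨σ, fun m => ⟨(hτ m).1, fun j hj => ?_⟩, hi'S, fun j hj => ?_⟩, hri'⟩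
  · by_cases hj' : j = i'
    · exact hj' ▸ (hσ_to _ (htm m)).mpr ((hτ m).2 i (hincl m (hj' ▸ hj)))
    · exact (hσ _ _ (htm m) hj').mpr ((hτ m).2 j hj)
  · by_cases hj' : j = i'
    · exact hj' ▸ le_rfl
    · exact (hσ_from j hj').mpr (hbelow j hj)

end

theorem statement2_general (n M : ℕ)
    (r : Fin (n + 1) → ℝ)
    (Sm : Fin M → Finset (Fin (n + 1)))
    (S : Finset (Fin (n + 1))) (hS : 0 ∈ S) :
    ∃ S' : Finset (Fin (n + 1)), Shat Sm r S' ∧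
      ∀ t : Fin M → Fin (n + 1), memL Sm t → rho Sm r t S ≤ rho Sm r t S' := by
  refine ⟨dominationClosure Sm r S, shat_dominationClosure hS, fun t ⟨σ, hσ⟩ => ?_⟩
  obtain ⟨i, hi⟩ := exists_isTop_s2 σ ⟨0, subset_dominationClosure S hS⟩
  exact rho_le_rho_of_forall_exists Sm r ⟨i, σ, hσ, hi⟩ fun _ => exists_compatibleTop_dominated

/-- Proposition 2 of the paper: every assortment can be exchanged for one in `Ŝ` with
pointwise larger `ρ` values. -/
theorem statement2 (n M : ℕ) (hn : 1 ≤ n) (hM : 1 ≤ M)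
    (r : Fin (n + 1) → ℝ) (hr0 : r 0 = 0) (hr : StrictMono r)
    (Sm : Fin M → Finset (Fin (n + 1))) (hSm0 : ∀ m, (0 : Fin (n + 1)) ∈ Sm m)
    (S : Finset (Fin (n + 1))) (hS : 0 ∈ S) :
    ∃ S' : Finset (Fin (n + 1)), Shat Sm r S' ∧
      ∀ t : Fin M → Fin (n + 1), memL Sm t → rho Sm r t S ≤ rho Sm r t S' :=
  statement2_general n M r Sm S hS

end RobustAssortment
end

section
/- Suppose M = 2, 0 ∈ S_1 ∩ S_2, n ∈ S_1 ∩ S_2, and S_1 ∪ S_2 = N₀. Then Ŝ equals the collection of all S ⊆ N₀ of the form S = (S_1 ∩ S_2) ∪ {j ∈ S_1 \ S_2 : j ≥ i_1} ∪ {j ∈ S_2 \ S_1 : j ≥ i_2} for some i_1 ∈ (S_1 \ S_2) ∪ {n} and some i_2 ∈ (S_2 \ S_1) ∪ {n}, where the comparisons j ≥ i_1 and j ≥ i_2 are between product indices in {0,1,…,n}. -/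
/-!
Write `A = S₁ ∩ S₂`, `B = S₁ \ S₂`, `C = S₂ \ S₁`; since `S₁ ∪ S₂` is everything, these partition
the products. For two past assortments, `i` dominates `i' < i` exactly when `i' ∈ A` forces `i ∈ A`,
`i' ∈ B` forces `i ∈ S₁`, and `i' ∈ C` forces `i ∈ S₂`. A dominance-closed `S` containing `0`
therefore contains all of `A` (every element of `A` dominates `0`), and meets `B` and `C` in upper
segments. An upper segment of `B` is cut off at its least element, or is empty, which is the
cut-off at `n ∉ B`. Conversely every union of `A` with upper segments of `B` and `C` is closed.
-/

namespace RobustAssortment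

section DominanceClosed

variable {α : Type*} [LinearOrder α] {S S₁ S₂ : Finset α}

/-- `S` contains every product that dominates one of its members, with respect to the two past
assortments `S₁`, `S₂` and revenues increasing along the order of `α`. -/
def IsDominanceClosed (S₁ S₂ S : Finset α) : Prop :=
  ∀ i' ∈ S, ∀ i, i' < i → (i' ∈ S₁ → i ∈ S₁) → (i' ∈ S₂ → i ∈ S₂) → i ∈ S

theorem IsDominanceClosed.symm (h : IsDominanceClosed S₁ S₂ S) : IsDominanceClosed S₂ S₁ S :=
  fun i' hi' i hlt h₂ h₁ => h i' hi' i hlt h₁ h₂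

variable [DecidableEq α]

theorem IsDominanceClosed.inter_subset (h : IsDominanceClosed S₁ S₂ S) {a : α} (ha : IsBot a)
    (haS : a ∈ S) : S₁ ∩ S₂ ⊆ S := by
  intro x hx
  rw [Finset.mem_inter] at hx
  rcases (ha x).eq_or_lt with rfl | hlt
  · exact haS
  · exact h a haS x hlt (fun _ => hx.1) (fun _ => hx.2)

theorem IsDominanceClosed.upward_closed_sdiff (h : IsDominanceClosed S₁ S₂ S) :
    ∀ x ∈ S ∩ (S₁ \ S₂), ∀ y ∈ S₁ \ S₂, x ≤ y → y ∈ S ∩ (S₁ \ S₂) := by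
  intro x hx y hy hle
  refine Finset.mem_inter.2 ⟨?_, hy⟩
  rw [Finset.mem_inter, Finset.mem_sdiff] at hx
  rw [Finset.mem_sdiff] at hy
  rcases hle.eq_or_lt with rfl | hlt
  · exact hx.1
  · exact h x hx.1 y hlt (fun _ => hy.1) (fun hx₂ => absurd hx₂ hx.2.2)

theorem isDominanceClosed_inter_union_filter_le (i₁ i₂ : α) :
    IsDominanceClosed S₁ S₂
      (S₁ ∩ S₂ ∪ (S₁ \ S₂).filter (fun j => i₁ ≤ j) ∪ (S₂ \ S₁).filter (fun j => i₂ ≤ j)) := by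
  intro i' hi' i hlt h₁ h₂
  have hle₁ : i₁ ≤ i' → i₁ ≤ i := fun h => h.trans hlt.le
  have hle₂ : i₂ ≤ i' → i₂ ≤ i := fun h => h.trans hlt.le
  simp only [Finset.mem_union, Finset.mem_filter, Finset.mem_inter, Finset.mem_sdiff] at hi' ⊢
  tauto

end DominanceClosed

theorem exists_eq_filter_le {α : Type*} [LinearOrder α] [DecidableEq α] {B T : Finset α} {t : α}
    (ht : IsTop t) (htB : t ∉ B) (hTB : T ⊆ B) (hT : ∀ x ∈ T, ∀ y ∈ B, x ≤ y → y ∈ T) :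
    ∃ i ∈ B ∪ {t}, T = B.filter (fun j => i ≤ j) := by
  rcases T.eq_empty_or_nonempty with rfl | hne
  · refine ⟨t, Finset.mem_union_right _ (Finset.mem_singleton_self t), ?_⟩
    refine (Finset.filter_false_of_mem fun y hy hty => ?_).symm
    exact htB (le_antisymm hty (ht y) ▸ hy)
  · refine ⟨T.min' hne, Finset.mem_union_left _ (hTB (T.min'_mem hne)), ?_⟩
    ext y
    rw [Finset.mem_filter]
    exact ⟨fun hy => ⟨hTB hy, T.min'_le y hy⟩,
      fun hy => hT _ (T.min'_mem hne) y hy.1 hy.2⟩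

theorem eq_inter_union_inter_sdiff_union_inter_sdiff {α : Type*} [Fintype α]
    [DecidableEq α] {S S₁ S₂ : Finset α} (hu : S₁ ∪ S₂ = Finset.univ) (hS : S₁ ∩ S₂ ⊆ S) :
    S = S₁ ∩ S₂ ∪ S ∩ (S₁ \ S₂) ∪ S ∩ (S₂ \ S₁) := by
  ext x
  have hx := Finset.mem_univ x
  rw [← hu, Finset.mem_union] at hx
  have := @hS x
  simp only [Finset.mem_union, Finset.mem_inter, Finset.mem_sdiff] at this ⊢
  tauto

theorem shat_pair_iff {n : ℕ} {r : Fin (n + 1) → ℝ} (hr : StrictMono r)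
    (S₁ S₂ S : Finset (Fin (n + 1))) :
    Shat ![S₁, S₂] r S ↔ 0 ∈ S ∧ IsDominanceClosed S₁ S₂ S := by
  simp only [Shat, IsDominanceClosed, hr.lt_iff_lt, Fin.forall_fin_two, Matrix.cons_val_zero,
    Matrix.cons_val_one, and_imp]

theorem statement4_general (n : ℕ)
    (r : Fin (n + 1) → ℝ) (hr : StrictMono r)
    (S1 S2 : Finset (Fin (n + 1)))
    (h01 : (0 : Fin (n + 1)) ∈ S1) (h02 : (0 : Fin (n + 1)) ∈ S2)
    (hn1 : Fin.last n ∈ S1) (hn2 : Fin.last n ∈ S2)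
    (hu : S1 ∪ S2 = Finset.univ) :
    ∀ S : Finset (Fin (n + 1)),
      Shat ![S1, S2] r S ↔
        ∃ i1 ∈ (S1 \ S2) ∪ {Fin.last n}, ∃ i2 ∈ (S2 \ S1) ∪ {Fin.last n},
          S = (S1 ∩ S2) ∪ (S1 \ S2).filter (fun j => i1 ≤ j)
              ∪ (S2 \ S1).filter (fun j => i2 ≤ j) := by
  intro S
  rw [shat_pair_iff hr]
  constructor
  · rintro ⟨h0S, hS⟩
    have hlast : IsTop (Fin.last n) := Fin.le_last
    obtain ⟨i1, hi1, h1⟩ := exists_eq_filter_le hlast (fun h => (Finset.mem_sdiff.1 h).2 hn2)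
      Finset.inter_subset_right hS.upward_closed_sdiff
    obtain ⟨i2, hi2, h2⟩ := exists_eq_filter_le hlast (fun h => (Finset.mem_sdiff.1 h).2 hn1)
      Finset.inter_subset_right hS.symm.upward_closed_sdiff
    refine ⟨i1, hi1, i2, hi2, ?_⟩
    rw [← h1, ← h2]
    exact eq_inter_union_inter_sdiff_union_inter_sdiff hu
      (hS.inter_subset Fin.zero_le h0S)
  · rintro ⟨i1, -, i2, -, rfl⟩
    exact ⟨by simp [h01, h02], isDominanceClosed_inter_union_filter_le i1 i2⟩

/-- Lemma 1 of the paper: closed form of `Ŝ` for two past assortments. -/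
theorem statement4 (n : ℕ) (hn : 1 ≤ n)
    (r : Fin (n + 1) → ℝ) (hr0 : r 0 = 0) (hr : StrictMono r)
    (S1 S2 : Finset (Fin (n + 1)))
    (h01 : (0 : Fin (n + 1)) ∈ S1) (h02 : (0 : Fin (n + 1)) ∈ S2)
    (hn1 : Fin.last n ∈ S1) (hn2 : Fin.last n ∈ S2)
    (hu : S1 ∪ S2 = Finset.univ) :
    ∀ S : Finset (Fin (n + 1)),
      Shat ![S1, S2] r S ↔
        ∃ i1 ∈ (S1 \ S2) ∪ {Fin.last n}, ∃ i2 ∈ (S2 \ S1) ∪ {Fin.last n},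
          S = (S1 ∩ S2) ∪ (S1 \ S2).filter (fun j => i1 ≤ j)
              ∪ (S2 \ S1).filter (fun j => i2 ≤ j) :=
  statement4_general n r hr S1 S2 h01 h02 hn1 hn2 hu

end RobustAssortment
end

section
/- Suppose M = 2. Then L = ((S_1 \ S_2) × S_2) ∪ (S_1 × (S_2 \ S_1)) ∪ {(i,i) : i ∈ S_1 ∩ S_2}. -/
namespace RobustAssortment

lemma exists_perm_top_two {n : ℕ} (hn : 1 ≤ n) (a b : Fin (n + 1)) (hab : a ≠ b) :
    ∃ σ : Equiv.Perm (Fin (n + 1)), σ a = 0 ∧ σ b = 1 := by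
  have h01 : (0 : Fin (n + 1)) ≠ 1 := by
    simp [Fin.ext_iff, Fin.val_one]
    omega
  set b' := Equiv.swap 0 a b with hb'
  have hb0 : b' ≠ 0 := fun h =>
    hab ((Equiv.swap 0 a).injective (h.trans (Equiv.swap_apply_right 0 a).symm)).symm
  refine ⟨(Equiv.swap 0 a).trans (Equiv.swap b' 1), ?_, ?_⟩
  · simp only [Equiv.trans_apply, Equiv.swap_apply_right]
    rw [Equiv.swap_apply_of_ne_of_ne (Ne.symm hb0) h01]
  · simp only [Equiv.trans_apply, ← hb', Equiv.swap_apply_left]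

lemma one_le_of_ne_zero {n : ℕ} (hn : 1 ≤ n) (x : Fin (n + 1)) (hx : x ≠ 0) :
    (1 : Fin (n + 1)) ≤ x := by
  have : x.val ≠ 0 := fun h => hx (Fin.ext (h.trans (by simp)))
  have h1 : (1 : Fin (n + 1)).val = 1 % (n + 1) := rfl
  rw [Fin.le_def, h1, Nat.mod_eq_of_lt (by omega)]
  omega

/-- Lemma 2 of the paper: closed form of `L` for two past assortments. -/
theorem statement5 (n : ℕ) (hn : 1 ≤ n)
    (S1 S2 : Finset (Fin (n + 1)))
    (h01 : (0 : Fin (n + 1)) ∈ S1) (h02 : (0 : Fin (n + 1)) ∈ S2) :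
    ∀ t : Fin 2 → Fin (n + 1),
      memL ![S1, S2] t ↔
        ((t 0 ∈ S1 \ S2 ∧ t 1 ∈ S2) ∨ (t 0 ∈ S1 ∧ t 1 ∈ S2 \ S1) ∨
          (t 0 = t 1 ∧ t 0 ∈ S1 ∩ S2)) := by
  intro t
  constructor
  · rintro ⟨σ, h⟩
    obtain ⟨m0, hs0⟩ := h 0
    obtain ⟨m1, hs1⟩ := h 1
    simp only [Matrix.cons_val_zero, Matrix.cons_val_one, Matrix.head_cons] at m0 hs0 m1 hs1
    by_cases hc : t 0 ∈ S2
    · by_cases hd : t 1 ∈ S1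
      · right; right
        have heq : t 0 = t 1 := σ.injective (le_antisymm (hs0 _ hd) (hs1 _ hc))
        exact ⟨heq, Finset.mem_inter.mpr ⟨m0, hc⟩⟩
      · right; left; exact ⟨m0, Finset.mem_sdiff.mpr ⟨m1, hd⟩⟩
    · left; exact ⟨Finset.mem_sdiff.mpr ⟨m0, hc⟩, m1⟩
  · rintro (⟨h0, h1⟩ | ⟨h0, h1⟩ | ⟨heq, hmem⟩)
    · obtain ⟨h0S, h0n⟩ := Finset.mem_sdiff.mp h0
      have hab : t 0 ≠ t 1 := fun h => h0n (h ▸ h1)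
      obtain ⟨σ, hσ0, hσ1⟩ := exists_perm_top_two hn (t 0) (t 1) hab
      refine ⟨σ, ?_⟩
      intro m
      fin_cases m
      · exact ⟨h0S, fun j _ => by simp [hσ0, Fin.zero_le]⟩
      · refine ⟨h1, fun j hj => ?_⟩
        have hj' : j ∈ S2 := hj
        show σ (t 1) ≤ σ j
        rw [hσ1]
        apply one_le_of_ne_zero hn
        intro h
        have : j = t 0 := σ.injective (by rw [h, hσ0])
        exact h0n (this ▸ hj')
    · obtain ⟨h1S, h1n⟩ := Finset.mem_sdiff.mp h1
      have hab : t 1 ≠ t 0 := fun h => h1n (h ▸ h0)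
      obtain ⟨σ, hσ1, hσ0⟩ := exists_perm_top_two hn (t 1) (t 0) hab
      refine ⟨σ, ?_⟩
      intro m
      fin_cases m
      · refine ⟨h0, fun j hj => ?_⟩
        have hj' : j ∈ S1 := hj
        show σ (t 0) ≤ σ j
        rw [hσ0]
        apply one_le_of_ne_zero hn
        intro h
        have : j = t 1 := σ.injective (by rw [h, hσ1])
        exact h1n (this ▸ hj')
      · exact ⟨h1S, fun j _ => by simp [hσ1, Fin.zero_le]⟩
    · obtain ⟨hm1, hm2⟩ := Finset.mem_inter.mp hmem
      refine ⟨Equiv.swap 0 (t 0), ?_⟩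
      intro m
      fin_cases m
      · exact ⟨hm1, fun j _ => by simp [Equiv.swap_apply_right, Fin.zero_le]⟩
      · exact ⟨heq ▸ hm2, fun j _ => by simp [← heq, Equiv.swap_apply_right, Fin.zero_le]⟩

end RobustAssortment
end

section
/- The collection Ŝ contains at most (n+2)^(2^M) assortments, i.e., the cardinality of Ŝ is at most (n+2)^(2^M). -/
/-!
Call the set of past assortments containing a product its signature. Whenever `i' < i` have
the same signature, the defining condition of `Ŝ` forces `i ∈ S` from `i' ∈ S`, so inside each
signature class an assortment of `Ŝ` is an upper set, determined by its least element (or by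
being empty). An assortment of `Ŝ` is therefore determined by a map from the `2 ^ M` possible
signatures to the `n + 2` values of `WithTop (Fin (n + 1))`.
-/

namespace RobustAssortment

section Fibres

variable {α β : Type*} [LinearOrder α] (sig : α → β)

def IsUpperOnFibres (S : Finset α) : Prop :=
  ∀ i' ∈ S, ∀ i, i' < i → sig i' = sig i → i ∈ S

def fibreMin [DecidableEq β] (S : Finset α) (b : β) : WithTop α :=
  (S.filter (sig · = b)).min

variable {sig}

theorem IsUpperOnFibres.mem_iff_fibreMin_le [DecidableEq β] {S : Finset α}
    (hS : IsUpperOnFibres sig S) (i : α) : i ∈ S ↔ fibreMin sig S (sig i) ≤ i := by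
  refine ⟨fun hi => Finset.min_le (Finset.mem_filter.2 ⟨hi, rfl⟩), fun hle => ?_⟩
  obtain ⟨i', hi'⟩ : ∃ i' : α, fibreMin sig S (sig i) = i' := by
    cases h : fibreMin sig S (sig i) with
    | top => simp [h] at hle
    | coe i' => exact ⟨i', rfl⟩
  obtain ⟨hi'S, hsig⟩ := Finset.mem_filter.1 (Finset.mem_of_min hi')
  rcases (WithTop.coe_le_coe.1 (hi' ▸ hle)).lt_or_eq with hlt | rfl
  · exact hS i' hi'S i hlt hsig
  · exact hi'S

theorem injOn_fibreMin [DecidableEq β] :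
    Set.InjOn (fibreMin sig) {S : Finset α | IsUpperOnFibres sig S} := by
  intro S₁ h₁ S₂ h₂ heq
  ext i
  rw [h₁.mem_iff_fibreMin_le, h₂.mem_iff_fibreMin_le, heq]

theorem ncard_isUpperOnFibres_le [Fintype α] [Fintype β] :
    {S : Finset α | IsUpperOnFibres sig S}.ncard ≤ (Fintype.card α + 1) ^ Fintype.card β := by
  classical
  calc {S : Finset α | IsUpperOnFibres sig S}.ncard
      ≤ (Set.univ : Set (β → WithTop α)).ncard :=
        Set.ncard_le_ncard_of_injOn _ (fun _ _ => Set.mem_univ _) injOn_fibreMin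
    _ = (Fintype.card α + 1) ^ Fintype.card β := by
        rw [Set.ncard_univ, Nat.card_eq_fintype_card, Fintype.card_fun]
        exact congrArg (· ^ _) (Fintype.card_option (α := α))

end Fibres

def signature {n M : ℕ} (Sm : Fin M → Finset (Fin (n + 1))) (i : Fin (n + 1)) :
    Finset (Fin M) :=
  {m | i ∈ Sm m}

@[simp]
theorem mem_signature {n M : ℕ} {Sm : Fin M → Finset (Fin (n + 1))} {i : Fin (n + 1)}
    {m : Fin M} : m ∈ signature Sm i ↔ i ∈ Sm m := by
  simp [signature]

theorem Shat.isUpperOnFibres {n M : ℕ} {Sm : Fin M → Finset (Fin (n + 1))}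
    {r : Fin (n + 1) → ℝ} (hr : StrictMono r) {S : Finset (Fin (n + 1))} (hS : Shat Sm r S) :
    IsUpperOnFibres (signature Sm) S := by
  intro i' hi' i hlt hsig
  refine hS.2 i' hi' i (hr hlt) fun m hm => ?_
  rw [← mem_signature, ← hsig, mem_signature]
  exact hm

theorem statement6_general (n M : ℕ)
    (r : Fin (n + 1) → ℝ) (hr : StrictMono r)
    (Sm : Fin M → Finset (Fin (n + 1))) :
    {S : Finset (Fin (n + 1)) | Shat Sm r S}.ncard ≤ (n + 2) ^ (2 ^ M) := by
  calc {S : Finset (Fin (n + 1)) | Shat Sm r S}.ncard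
      ≤ {S : Finset (Fin (n + 1)) | IsUpperOnFibres (signature Sm) S}.ncard :=
        Set.ncard_le_ncard (fun S hS => hS.isUpperOnFibres hr) (Set.toFinite _)
    _ ≤ (n + 2) ^ (2 ^ M) := by
        simpa [Fintype.card_finset] using ncard_isUpperOnFibres_le (sig := signature Sm)

/-- Lemma 5 of the paper: `|Ŝ| ≤ (n+2)^(2^M)`. -/
theorem statement6 (n M : ℕ) (hn : 1 ≤ n) (hM : 1 ≤ M)
    (r : Fin (n + 1) → ℝ) (hr0 : r 0 = 0) (hr : StrictMono r)
    (Sm : Fin M → Finset (Fin (n + 1))) (hSm0 : ∀ m, (0 : Fin (n + 1)) ∈ Sm m) :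
    {S : Finset (Fin (n + 1)) | Shat Sm r S}.ncard ≤ (n + 2) ^ (2 ^ M) :=
  statement6_general n M r hr Sm

end RobustAssortment
end

section
/- Suppose the past assortments are the reverse revenue-ordered assortments. Then Ŝ = { S ⊆ N₀ : 0 ∈ S and n ∈ S }. -/
namespace RobustAssortment

/-! With reverse revenue-ordered past assortments, a product `i` is offered in every past
assortment offering a cheaper product `i'` only when `i = n`: otherwise the assortment
`{0, …, i'} ∪ {n}` separates them. So the only closure condition defining `Ŝ` is that
`n` must accompany `0`. -/

theorem shat_iff_of_strictMono {n M : ℕ} {Sm : Fin M → Finset (Fin (n + 1))}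
    {r : Fin (n + 1) → ℝ} (hr : StrictMono r) (S : Finset (Fin (n + 1))) :
    Shat Sm r S ↔ 0 ∈ S ∧ ∀ i' ∈ S, ∀ i, i' < i →
      (∀ m, i' ∈ Sm m → i ∈ Sm m) → i ∈ S := by
  simp only [Shat, hr.lt_iff_lt]

/-- The paper's past assortment `S_{m+1} = {0, 1, …, m} ∪ {n}`. -/
def reverseRevenueOrdered (n : ℕ) (m : Fin n) : Finset (Fin (n + 1)) :=
  Finset.univ.filter (fun i : Fin (n + 1) => (i : ℕ) ≤ (m : ℕ) ∨ i = Fin.last n)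

theorem mem_reverseRevenueOrdered {n : ℕ} {m : Fin n} {i : Fin (n + 1)} :
    i ∈ reverseRevenueOrdered n m ↔ (i : ℕ) ≤ m ∨ i = Fin.last n := by
  simp [reverseRevenueOrdered]

theorem forall_mem_reverseRevenueOrdered_imp_iff {n : ℕ} {i' i : Fin (n + 1)} (hlt : i' < i) :
    (∀ m, i' ∈ reverseRevenueOrdered n m → i ∈ reverseRevenueOrdered n m) ↔
      i = Fin.last n := by
  refine ⟨fun hdom => ?_, fun hi m _ => mem_reverseRevenueOrdered.2 (Or.inr hi)⟩
  by_contra hi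
  have hi_lt : (i : ℕ) < n := Fin.val_lt_last hi
  have hsep := hdom ⟨i', (Fin.lt_def.1 hlt).trans hi_lt⟩ (mem_reverseRevenueOrdered.2 (Or.inl le_rfl))
  rcases mem_reverseRevenueOrdered.1 hsep with hle | hlast
  · exact absurd hlt (not_lt.2 (Fin.le_def.2 hle))
  · exact hi hlast

theorem statement7_general (n : ℕ) (hn : 1 ≤ n)
    (r : Fin (n + 1) → ℝ) (hr : StrictMono r)
    (Sm : Fin n → Finset (Fin (n + 1)))
    (hSm : ∀ m : Fin n, Sm m =
      Finset.univ.filter (fun i : Fin (n + 1) => (i : ℕ) ≤ (m : ℕ) ∨ i = Fin.last n)) :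
    ∀ S : Finset (Fin (n + 1)), Shat Sm r S ↔ (0 ∈ S ∧ Fin.last n ∈ S) := by
  obtain rfl : Sm = reverseRevenueOrdered n := funext hSm
  have h0_lt_last : (0 : Fin (n + 1)) < Fin.last n := Fin.lt_def.2 hn
  intro S
  rw [shat_iff_of_strictMono hr]
  constructor
  · rintro ⟨h0, hclosed⟩
    exact ⟨h0, hclosed 0 h0 _ h0_lt_last
      ((forall_mem_reverseRevenueOrdered_imp_iff h0_lt_last).2 rfl)⟩
  · rintro ⟨h0, hlast⟩
    refine ⟨h0, fun i' _ i hlt hdom => ?_⟩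
    rwa [(forall_mem_reverseRevenueOrdered_imp_iff hlt).1 hdom]

/-- Lemma 8 of the paper: with reverse revenue-ordered past assortments, `Ŝ` is the
collection of all subsets containing `0` and `n`. (The `m`-th past assortment, `m : Fin n`,
is the paper's assortment `S_{m+1} = {0, 1, …, m} ∪ {n}`.) -/
theorem statement7 (n : ℕ) (hn : 1 ≤ n)
    (r : Fin (n + 1) → ℝ) (hr0 : r 0 = 0) (hr : StrictMono r)
    (Sm : Fin n → Finset (Fin (n + 1)))
    (hSm : ∀ m : Fin n, Sm m =
      Finset.univ.filter (fun i : Fin (n + 1) => (i : ℕ) ≤ (m : ℕ) ∨ i = Fin.last n)) :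
    ∀ S : Finset (Fin (n + 1)), Shat Sm r S ↔ (0 ∈ S ∧ Fin.last n ∈ S) :=
  statement7_general n hn r hr Sm hSm

end RobustAssortment
end

section
/- Suppose the past assortments are nested. Then L = {(i_1,…,i_M) ∈ S_1 × ⋯ × S_M : for every m ∈ {1,…,M−1}, i_{m+1} ∈ {i_m} ∪ B_{m+1}}. -/
/-!
A tuple `t` is realizable by a ranking exactly when it is stable: whenever `m ≤ k` and `t k`
already lies in `S_m`, then `t k = t m`. Stability is necessary because the top of the larger
assortment `S_k`, if it lies in `S_m`, is also the top of `S_m`; for nested assortments it is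
equivalent to the one-step condition of the theorem by induction on `k`. Conversely, a stable
tuple is realized by any ranking that prefers products chosen at later stages, since within
`S_m` the product `t m` is the one chosen last.
-/

namespace RobustAssortment

theorem exists_perm_lt_of_lt {k : ℕ} {β : Type*} [LinearOrder β] (f : Fin k → β) :
    ∃ σ : Equiv.Perm (Fin k), ∀ x y, f x < f y → σ x < σ y := by
  refine ⟨(Tuple.sort f)⁻¹, fun x y hxy => lt_of_not_ge fun hyx => hxy.not_ge ?_⟩
  simpa using Tuple.monotone_sort f hyx

section

variable {n : ℕ} {σ : Equiv.Perm (Fin (n + 1))} {S T : Finset (Fin (n + 1))} {i j : Fin (n + 1)}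

theorem isTop.eq (hi : isTop σ S i) (hj : isTop σ S j) : i = j :=
  σ.injective <| le_antisymm (hi.2 j hj.1) (hj.2 i hi.1)

theorem isTop.mono (hj : isTop σ T j) (hST : S ⊆ T) (hjS : j ∈ S) : isTop σ S j :=
  ⟨hjS, fun k hk => hj.2 k (hST hk)⟩

end

section

variable {n M : ℕ} {Sm : Fin M → Finset (Fin (n + 1))} {t : Fin M → Fin (n + 1)}

def Stable (Sm : Fin M → Finset (Fin (n + 1))) (t : Fin M → Fin (n + 1)) : Prop :=
  ∀ m k : Fin M, m ≤ k → t k ∈ Sm m → t k = t m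

/-- One plus the last stage at which `x` is chosen, and `0` if it is never chosen. -/
def lastChoice (t : Fin M → Fin (n + 1)) (x : Fin (n + 1)) : ℕ :=
  (Finset.univ.filter (t · = x)).sup fun m => (m : ℕ) + 1

theorem lt_lastChoice (m : Fin M) : (m : ℕ) < lastChoice t (t m) :=
  Finset.le_sup (f := fun m : Fin M => (m : ℕ) + 1) (by simp)

theorem lastChoice_le {x : Fin (n + 1)} {k : ℕ} (h : ∀ m, t m = x → (m : ℕ) < k) :
    lastChoice t x ≤ k :=
  Finset.sup_le fun m hm => h m (Finset.mem_filter.1 hm).2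

theorem memL_of_stable (hmem : ∀ m, t m ∈ Sm m) (hstable : Stable Sm t) : memL Sm t := by
  obtain ⟨σ, hσ⟩ := exists_perm_lt_of_lt fun x => OrderDual.toDual (lastChoice t x)
  refine ⟨σ, fun m => ⟨hmem m, fun j hj => ?_⟩⟩
  rcases eq_or_ne j (t m) with rfl | hne
  · exact le_rfl
  refine (hσ _ _ (OrderDual.toDual_lt_toDual.2 ?_)).le
  calc lastChoice t j ≤ m := lastChoice_le fun k hk => lt_of_not_ge fun hmk =>
          hne (hk ▸ hstable m k (Fin.le_iff_val_le_val.2 hmk) (hk ▸ hj))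
    _ < lastChoice t (t m) := lt_lastChoice m

theorem memL.stable (hS : Monotone Sm) (ht : memL Sm t) : Stable Sm t :=
  fun m k hmk hk =>
    let ⟨_, hσ⟩ := ht
    ((hσ k).mono (hS hmk) hk).eq (hσ m)

theorem stable_of_step (hS : Monotone Sm)
    (hstep : ∀ (m : ℕ) (h : m + 1 < M),
      t ⟨m + 1, h⟩ ∈ insert (t ⟨m, Nat.lt_of_succ_lt h⟩)
        (Sm ⟨m + 1, h⟩ \ Sm ⟨m, Nat.lt_of_succ_lt h⟩)) :
    Stable Sm t := by
  intro m k hmk hk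
  obtain ⟨k, hkM⟩ := k
  induction k with
  | zero =>
    exact congrArg t (Fin.ext (Nat.eq_zero_of_le_zero (Fin.le_iff_val_le_val.1 hmk)).symm)
  | succ k ih =>
    rcases (Fin.le_iff_val_le_val.1 hmk).eq_or_lt with heq | hlt
    · exact congrArg t (Fin.ext heq.symm)
    have hmk' : m ≤ ⟨k, by omega⟩ := Fin.le_iff_val_le_val.2 (Nat.le_of_lt_succ hlt)
    rcases Finset.mem_insert.1 (hstep k hkM) with heq | hnew
    · rw [heq] at hk ⊢
      exact ih _ hmk' hk
    · exact absurd (hS hmk' hk) (Finset.mem_sdiff.1 hnew).2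

end

theorem statement9_general (n M : ℕ)
    (Sm : Fin M → Finset (Fin (n + 1)))
    (hnested : ∀ m m' : Fin M, m < m' → Sm m ⊂ Sm m') :
    ∀ t : Fin M → Fin (n + 1),
      memL Sm t ↔
        ((∀ m : Fin M, t m ∈ Sm m) ∧
          ∀ (m : ℕ) (h : m + 1 < M),
            t ⟨m + 1, h⟩ ∈
              insert (t ⟨m, Nat.lt_of_succ_lt h⟩)
                (Sm ⟨m + 1, h⟩ \ Sm ⟨m, Nat.lt_of_succ_lt h⟩)) := by
  have hS : Monotone Sm := fun m m' h =>
    h.eq_or_lt.elim (fun heq => heq ▸ le_rfl) fun hlt => (hnested m m' hlt).subset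
  intro t
  constructor
  · intro ht
    obtain ⟨σ, hσ⟩ := id ht
    refine ⟨fun m => (hσ m).1, fun m h => ?_⟩
    by_cases hold : t ⟨m + 1, h⟩ ∈ Sm ⟨m, Nat.lt_of_succ_lt h⟩
    · exact Finset.mem_insert.2 <| .inl <|
        ht.stable hS _ _ (Fin.le_iff_val_le_val.2 (Nat.le_succ m)) hold
    · exact Finset.mem_insert_of_mem (Finset.mem_sdiff.2 ⟨(hσ _).1, hold⟩)
  · rintro ⟨hmem, hstep⟩
    exact memL_of_stable hmem (stable_of_step hS hstep)

/-- Lemma 9 of the paper: closed form of `L` for nested past assortments. -/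
theorem statement9 (n M : ℕ) (hn : 1 ≤ n) (hM : 1 ≤ M)
    (Sm : Fin M → Finset (Fin (n + 1))) (hSm0 : ∀ m, (0 : Fin (n + 1)) ∈ Sm m)
    (hnested : ∀ m m' : Fin M, m < m' → Sm m ⊂ Sm m') :
    ∀ t : Fin M → Fin (n + 1),
      memL Sm t ↔
        ((∀ m : Fin M, t m ∈ Sm m) ∧
          ∀ (m : ℕ) (h : m + 1 < M),
            t ⟨m + 1, h⟩ ∈
              insert (t ⟨m, Nat.lt_of_succ_lt h⟩)
                (Sm ⟨m + 1, h⟩ \ Sm ⟨m, Nat.lt_of_succ_lt h⟩)) :=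
  statement9_general n M Sm hnested

end RobustAssortment
end

section
/- Suppose the past assortments are nested. Then the cardinality of L is at least 2^(M−1). -/
namespace RobustAssortment

lemma exists_perm_of_weight {n : ℕ} (w : Fin (n+1) → ℕ) (hw : Function.Injective w) :
    ∃ σ : Equiv.Perm (Fin (n+1)), ∀ i j, σ i ≤ σ j ↔ w i ≤ w j := by
  classical
  set s : Finset ℕ := Finset.univ.image w with hs
  have hcard : s.card = n + 1 := by
    rw [hs, Finset.card_image_of_injective _ hw, Finset.card_univ, Fintype.card_fin]
  let e := s.orderIsoOfFin hcard
  let f : Fin (n+1) → Fin (n+1) := fun i => e.symm ⟨w i, by simp [hs]⟩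
  have hfinj : Function.Injective f := by
    intro i j hij
    have := e.symm.injective hij
    exact hw (Subtype.ext_iff.mp this)
  have hbij : Function.Bijective f := Finite.injective_iff_bijective.mp hfinj
  refine ⟨Equiv.ofBijective f hbij, fun i j => ?_⟩
  show f i ≤ f j ↔ w i ≤ w j
  rw [e.symm.le_iff_le]
  exact Subtype.mk_le_mk

/-- Corollary 1 of the paper: for nested past assortments, `|L| ≥ 2^(M-1)`. -/
theorem statement10 (n M : ℕ) (hn : 1 ≤ n) (hM : 1 ≤ M)
    (Sm : Fin M → Finset (Fin (n + 1))) (hSm0 : ∀ m, (0 : Fin (n + 1)) ∈ Sm m)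
    (hnested : ∀ m m' : Fin M, m < m' → Sm m ⊂ Sm m') :
    2 ^ (M - 1) ≤
      (Finset.univ.filter (fun t : Fin M → Fin (n + 1) => memL Sm t)).card := by
  classical
  obtain ⟨M', rfl⟩ : ∃ M', M = M' + 1 := ⟨M - 1, (Nat.succ_pred_eq_of_pos hM).symm⟩
  have hmono : ∀ m m' : Fin (M'+1), m ≤ m' → Sm m ⊆ Sm m' := by
    intro m m' h
    rcases eq_or_lt_of_le h with rfl | h
    · exact subset_rfl
    · exact (hnested m m' h).subset
  have hchoice : ∀ m : Fin (M'+1), m ≠ 0 →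
      ∃ x, x ∈ Sm m ∧ x ∉ Sm ⟨(m:ℕ)-1, by omega⟩ := by
    intro m hm
    have hv : (m:ℕ) ≠ 0 := by intro h; apply hm; ext; simp [h]
    have hlt : (⟨(m:ℕ)-1, by omega⟩ : Fin (M'+1)) < m := by
      simp only [Fin.lt_def]; omega
    obtain ⟨x, hx1, hx2⟩ := Finset.exists_of_ssubset (hnested _ m hlt)
    exact ⟨x, hx1, hx2⟩
  set a : Fin (M'+1) → Fin (n+1) :=
    fun m => if h : m = 0 then 0 else (hchoice m h).choose with ha_def
  have ha_mem : ∀ m, a m ∈ Sm m := by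
    intro m
    by_cases h : m = 0
    · simp only [ha_def, dif_pos h]; exact hSm0 m
    · simp only [ha_def, dif_neg h]; exact (hchoice m h).choose_spec.1
  have ha_not : ∀ m : Fin (M'+1), m ≠ 0 → a m ∉ Sm ⟨(m:ℕ)-1, by omega⟩ := by
    intro m h
    simp only [ha_def, dif_neg h]
    exact (hchoice m h).choose_spec.2
  have ha_iff : ∀ j m : Fin (M'+1), a j ∈ Sm m ↔ j ≤ m := by
    intro j m
    constructor
    · intro hj
      by_contra hle
      push_neg at hle
      have hj0 : j ≠ 0 := by
        intro h
        subst h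
        exact absurd hle (not_lt.mpr (Fin.zero_le m))
      have hjv : (j:ℕ) ≠ 0 := by intro h; apply hj0; ext; simp [h]
      have hsub : Sm m ⊆ Sm ⟨(j:ℕ)-1, by omega⟩ := by
        apply hmono
        have hmv : (m:ℕ) < (j:ℕ) := hle
        simp only [Fin.le_def]
        omega
      exact ha_not j hj0 (hsub hj)
    · intro h
      exact hmono j m h (ha_mem j)
  have ha_inj : Function.Injective a := by
    intro j j' h
    have h1 : j ≤ j' := (ha_iff j j').mp (by rw [h]; exact ha_mem j')
    have h2 : j' ≤ j := (ha_iff j' j).mp (by rw [← h]; exact ha_mem j)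
    exact le_antisymm h1 h2
  have hkex : ∀ (C : Finset (Fin (M'+1))), 0 ∈ C → ∀ m,
      ∃ k, k ∈ C ∧ k ≤ m ∧ ∀ j ∈ C, j ≤ m → j ≤ k := by
    intro C h0 m
    have hne : (C.filter (· ≤ m)).Nonempty := ⟨0, by simp [h0, Fin.zero_le]⟩
    refine ⟨(C.filter (· ≤ m)).max' hne, ?_, ?_, ?_⟩
    · exact (Finset.mem_filter.mp ((C.filter _).max'_mem hne)).1
    · exact (Finset.mem_filter.mp ((C.filter _).max'_mem hne)).2
    · intro j hj hjm
      have hjmem : j ∈ C.filter (· ≤ m) := Finset.mem_filter.mpr ⟨hj, hjm⟩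
      exact Finset.le_max' _ j hjmem
  choose k hk1 hk2 hk3 using hkex
  have hmemL : ∀ (C : Finset (Fin (M'+1))) (h0 : 0 ∈ C),
      memL Sm (fun m => a (k C h0 m)) := by
    intro C h0
    set w : Fin (n+1) → ℕ := fun i =>
      if h : ∃ j, j ∈ C ∧ a j = i then (M'+1) - ((h.choose : Fin (M'+1)) : ℕ)
      else (M'+2) + (i : ℕ) with hw_def
    have hwa : ∀ j ∈ C, w (a j) = (M'+1) - (j:ℕ) := by
      intro j hj
      have h : ∃ j', j' ∈ C ∧ a j' = a j := ⟨j, hj, rfl⟩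
      have hspec := h.choose_spec
      show (if h : ∃ j', j' ∈ C ∧ a j' = a j then (M'+1) - ((h.choose : Fin (M'+1)) : ℕ)
        else (M'+2) + ((a j : Fin (n+1)) : ℕ)) = (M'+1) - (j:ℕ)
      rw [dif_pos h, ha_inj hspec.2]
    have hwinj : Function.Injective w := by
      intro i i' hii
      by_cases h1 : ∃ j, j ∈ C ∧ a j = i
      · by_cases h2 : ∃ j, j ∈ C ∧ a j = i'
        · obtain ⟨j, hj, rfl⟩ := h1
          obtain ⟨j', hj', rfl⟩ := h2
          rw [hwa j hj, hwa j' hj'] at hii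
          have hb := j.isLt
          have hb' := j'.isLt
          have : (j:ℕ) = (j':ℕ) := by omega
          exact congrArg a (Fin.ext this)
        · rw [hw_def] at hii
          simp only [dif_pos h1, dif_neg h2] at hii
          omega
      · by_cases h2 : ∃ j, j ∈ C ∧ a j = i'
        · rw [hw_def] at hii
          simp only [dif_neg h1, dif_pos h2] at hii
          omega
        · rw [hw_def] at hii
          simp only [dif_neg h1, dif_neg h2] at hii
          exact Fin.ext (by omega)
    obtain ⟨σ, hσ⟩ := exists_perm_of_weight w hwinj
    refine ⟨σ, fun m => ⟨(ha_iff _ m).mpr (hk2 C h0 m), ?_⟩⟩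
    intro jj hjj
    rw [hσ, hwa _ (hk1 C h0 m)]
    by_cases h2 : ∃ j, j ∈ C ∧ a j = jj
    · obtain ⟨j', hj', rfl⟩ := h2
      rw [hwa j' hj']
      have hj'm : j' ≤ m := (ha_iff j' m).mp hjj
      have hle : j' ≤ k C h0 m := hk3 C h0 m j' hj' hj'm
      have hlev : (j':ℕ) ≤ ((k C h0 m):ℕ) := hle
      have hkv := (k C h0 m).isLt
      omega
    · rw [hw_def]
      simp only [dif_neg h2]
      omega
  have hCmem : ∀ (C : Finset (Fin (M'+1))) (h0 : 0 ∈ C) (m : Fin (M'+1)),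
      m ∈ C ↔ a (k C h0 m) = a m := by
    intro C h0 m
    constructor
    · intro hm
      have h1 := hk3 C h0 m m hm le_rfl
      have h2 := hk2 C h0 m
      rw [le_antisymm h2 h1]
    · intro h
      have := ha_inj h
      rw [← this]
      exact hk1 C h0 m
  set D0 : Finset (Fin (M'+1)) := Finset.univ.erase 0 with hD0
  have key : D0.powerset.card ≤
      (Finset.univ.filter (fun t : Fin (M'+1) → Fin (n + 1) => memL Sm t)).card := by
    apply Finset.card_le_card_of_injOn
      (fun D => fun m => a (k (insert 0 D) (Finset.mem_insert_self 0 D) m))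
    · intro D hD
      simp only [Finset.mem_filter, Finset.mem_univ, true_and]
      exact Finset.mem_coe.mpr (Finset.mem_filter.mpr ⟨Finset.mem_univ _, hmemL _ _⟩)
    · intro D hD D' hD' hDD'
      simp only [Finset.coe_powerset, Set.mem_preimage, Set.mem_powerset_iff,
        Finset.coe_subset] at hD hD'
      have h0D : (0 : Fin (M'+1)) ∉ D := fun h => (Finset.mem_erase.mp (hD h)).1 rfl
      have h0D' : (0 : Fin (M'+1)) ∉ D' := fun h => (Finset.mem_erase.mp (hD' h)).1 rfl
      have hins : insert 0 D = insert 0 D' := by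
        ext m
        have hpt : a (k (insert 0 D) (Finset.mem_insert_self 0 D) m)
            = a (k (insert 0 D') (Finset.mem_insert_self 0 D') m) := congrFun hDD' m
        rw [hCmem _ (Finset.mem_insert_self 0 D) m, hCmem _ (Finset.mem_insert_self 0 D') m, hpt]
      have := congrArg (fun s => Finset.erase s 0) hins
      simpa [Finset.erase_insert h0D, Finset.erase_insert h0D'] using this
  have hcard : D0.powerset.card = 2 ^ M' := by
    rw [Finset.card_powerset, hD0, Finset.card_erase_of_mem (Finset.mem_univ _),
      Finset.card_univ, Fintype.card_fin]
    norm_num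
  rw [Nat.add_sub_cancel]
  rw [hcard] at key
  exact key


end RobustAssortment
end

section
/- Suppose the past assortments are nested, and let S ⊆ N₀ satisfy S ∩ S_1 ≠ ∅. Then for every tuple (i_1,…,i_M) ∈ L and every m ∈ {1,…,M}: (a) if i_m ∈ S, then ρ_{i_1⋯i_M}(S ∩ S_m) = r(i_m); (b) if i_m ∉ S and m = 1, then ρ_{i_1⋯i_M}(S ∩ S_1) = min_{i ∈ B_1 ∩ S} r(i); (c) if i_m ∉ S and m ≥ 2, then ρ_{i_1⋯i_M}(S ∩ S_m) = min( {ρ_{i_1⋯i_M}(S ∩ S_{m−1})} ∪ {r(i) : i ∈ B_m ∩ S} ). -/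
/-!
Write `T(A)` for the set of products that some ranking consistent with the tuple `t` puts on
top of `A`, so that `ρ(A)` is the least revenue on `T(A)`. If `t m ∈ S`, every consistent
ranking has `t m` on top of `S ∩ S_m`, so `T(S ∩ S_m) = {t m}`. If `t m ∉ S`, then
`T(S ∩ S_m) = T(S ∩ S_{m-1}) ∪ (B_m ∩ S)` (with `T(S ∩ S_0) = ∅`): a product of `B_m ∩ S`
can be moved to just behind `t m`, and a top of `S ∩ S_{m-1}` stays a top of `S ∩ S_m` once
the products of `B_m ∩ S` are moved to just behind it; nestedness keeps both moves consistent
with `t`. Taking minima of revenues gives the three formulas.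
-/

namespace RobustAssortment

section

variable {k : ℕ}

lemma exists_perm_lt_iff_of_injective {α : Type*} [LinearOrder α] (w : Fin k → α)
    (hw : Function.Injective w) :
    ∃ σ : Equiv.Perm (Fin k), ∀ x y, σ x < σ y ↔ w x < w y := by
  classical
  let e := (Finset.univ.image w).orderIsoOfFin
    (by rw [Finset.card_image_of_injective _ hw, Finset.card_fin])
  let f : Fin k → Fin k := fun x =>
    e.symm ⟨w x, Finset.mem_image_of_mem w (Finset.mem_univ x)⟩
  have hf : ∀ x y, f x < f y ↔ w x < w y := fun x y => e.symm.lt_iff_lt.trans Subtype.mk_lt_mk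
  have hf_inj : Function.Injective f := fun x y hxy =>
    hw (congrArg Subtype.val (e.symm.injective hxy))
  exact ⟨Equiv.ofBijective f (Finite.injective_iff_bijective.mp hf_inj), hf⟩

lemma exists_perm_move_after (σ : Equiv.Perm (Fin k)) (D : Finset (Fin k)) (p : Fin k) :
    ∃ σ' : Equiv.Perm (Fin k),
      (∀ x ∉ D, ∀ y ∉ D, σ' x ≤ σ' y ↔ σ x ≤ σ y) ∧
      (∀ x ∉ D, ∀ y ∈ D, σ' x < σ' y ↔ σ x ≤ σ p) ∧
      (∀ x ∈ D, ∀ y ∉ D, σ' x < σ' y ↔ σ p < σ y) := by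
  classical
  -- `D` is squeezed, in its old order, between `p` and the successor of `p`.
  let w : Fin k → ℕ ×ₗ ℕ := fun x =>
    if x ∈ D then toLex ((σ p : ℕ), (σ x : ℕ) + 1) else toLex ((σ x : ℕ), 0)
  have hw : Function.Injective w := by
    intro x y hxy
    apply σ.injective
    by_cases hx : x ∈ D <;> by_cases hy : y ∈ D <;>
      simp only [w, hx, hy, if_true, if_false, EmbeddingLike.apply_eq_iff_eq,
        Prod.mk.injEq] at hxy <;> omega
  obtain ⟨σ', hσ'⟩ := exists_perm_lt_iff_of_injective w hw
  refine ⟨σ', fun x hx y hy => ?_, fun x hx y hy => ?_, fun x hx y hy => ?_⟩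
  · rw [le_iff_le_iff_lt_iff_lt, hσ']
    simp only [w, hx, hy, if_false, Prod.Lex.toLex_lt_toLex]
    omega
  all_goals
    rw [hσ']
    simp only [w, hx, hy, if_true, if_false, Prod.Lex.toLex_lt_toLex]
    omega

end

section

variable {n M : ℕ} {Sm : Fin M → Finset (Fin (n + 1))} {t : Fin M → Fin (n + 1)}

def Consistent (Sm : Fin M → Finset (Fin (n + 1))) (t : Fin M → Fin (n + 1))
    (σ : Equiv.Perm (Fin (n + 1))) : Prop :=
  ∀ m, isTop σ (Sm m) (t m)

def topCandidates (Sm : Fin M → Finset (Fin (n + 1))) (t : Fin M → Fin (n + 1))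
    (A : Finset (Fin (n + 1))) : Set (Fin (n + 1)) :=
  {i | ∃ σ, Consistent Sm t σ ∧ isTop σ A i}

lemma rho_eq_sInf_image (r : Fin (n + 1) → ℝ) (A : Finset (Fin (n + 1))) :
    rho Sm r t A = sInf (r '' topCandidates Sm t A) := by
  unfold rho
  congr 1
  ext x
  constructor
  · rintro ⟨i, -, hi, rfl⟩
    exact ⟨i, hi, rfl⟩
  · rintro ⟨i, ⟨σ, hσ, hi⟩, rfl⟩
    exact ⟨i, hi.1, ⟨σ, hσ, hi⟩, rfl⟩

lemma topCandidates_subset (A : Finset (Fin (n + 1))) : topCandidates Sm t A ⊆ A :=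
  fun _ ⟨_, _, hi⟩ => hi.1

lemma topCandidates_nonempty (ht : memL Sm t) {A : Finset (Fin (n + 1))} (hA : A.Nonempty) :
    (topCandidates Sm t A).Nonempty := by
  obtain ⟨σ, hσ⟩ := ht
  obtain ⟨i, hiA, hi⟩ := A.exists_min_image σ hA
  exact ⟨i, σ, hσ, hiA, hi⟩

lemma mem_topCandidates_of_subset {A B : Finset (Fin (n + 1))} (hAB : A ⊆ B) {i : Fin (n + 1)}
    (hi : i ∈ topCandidates Sm t B) (hiA : i ∈ A) : i ∈ topCandidates Sm t A :=
  let ⟨σ, hσ, hiB⟩ := hi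
  ⟨σ, hσ, hiA, fun j hj => hiB.2 j (hAB hj)⟩

lemma topCandidates_inter_eq_singleton (ht : memL Sm t) (S : Finset (Fin (n + 1))) {m : Fin M}
    (htm : t m ∈ S) : topCandidates Sm t (S ∩ Sm m) = {t m} := by
  obtain ⟨σ₀, hσ₀⟩ := ht
  ext i
  constructor
  · rintro ⟨σ, hσ, hi⟩
    have hti : σ (t m) ≤ σ i := (hσ m).2 i (Finset.mem_inter.1 hi.1).2
    exact σ.injective (le_antisymm (hi.2 _ (Finset.mem_inter.2 ⟨htm, (hσ m).1⟩)) hti)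
  · rintro rfl
    exact ⟨σ₀, hσ₀, Finset.mem_inter.2 ⟨htm, (hσ₀ m).1⟩,
      fun j hj => (hσ₀ m).2 j (Finset.mem_inter.1 hj).2⟩

/-- Promote `i` to just after `t m`. -/
lemma mem_topCandidates_inter_of_forall_lt_notMem (hSm : Monotone Sm)
    {σ : Equiv.Perm (Fin (n + 1))} (hσ : Consistent Sm t σ) {S : Finset (Fin (n + 1))}
    {m : Fin M} (htm : t m ∉ S) {i : Fin (n + 1)} (hiS : i ∈ S) (him : i ∈ Sm m)
    (hnew : ∀ m' < m, i ∉ Sm m') : i ∈ topCandidates Sm t (S ∩ Sm m) := by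
  classical
  obtain ⟨σ', hout, hto, hfrom⟩ := exists_perm_move_after σ {i} (t m)
  have hle : ∀ m', i ∈ Sm m' → σ (t m') ≤ σ (t m) := fun m' hm' =>
    (hσ m').2 _ (hSm (not_lt.1 fun h => hnew m' h hm') (hσ m).1)
  have hti : ∀ m', t m' ∉ ({i} : Finset _) := by
    intro m' hm'
    rw [Finset.mem_singleton] at hm'
    subst hm'
    have : t m = t m' := σ.injective (le_antisymm ((hσ m).2 _ him) (hle m' (hσ m').1))
    exact htm (this ▸ hiS)
  refine ⟨σ', fun m' => ⟨(hσ m').1, fun j hj => ?_⟩, Finset.mem_inter.2 ⟨hiS, him⟩,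
    fun j hj => ?_⟩
  · by_cases hji : j = i
    · subst hji
      exact ((hto _ (hti m') _ (Finset.mem_singleton_self j)).2 (hle m' hj)).le
    · exact (hout _ (hti m') _ (by simpa using hji)).2 ((hσ m').2 j hj)
  · obtain ⟨hjS, hjm⟩ := Finset.mem_inter.1 hj
    by_cases hji : j = i
    · exact hji ▸ le_rfl
    · refine ((hfrom _ (Finset.mem_singleton_self i) _ (by simpa using hji)).2 ?_).le
      exact lt_of_le_of_ne ((hσ m).2 j hjm) (fun h => htm (σ.injective h ▸ hjS))

/-- Demote the new products `(Sm m \ Sm m₁) ∩ S` to just after `i`. -/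
lemma mem_topCandidates_inter_of_mem_topCandidates_pred (hSm : Monotone Sm)
    {S : Finset (Fin (n + 1))} {m₁ m : Fin M} (hm₁ : m₁ < m) (hpred : ∀ m' < m, m' ≤ m₁)
    (htm : t m ∉ S) {i : Fin (n + 1)} (hi : i ∈ topCandidates Sm t (S ∩ Sm m₁)) :
    i ∈ topCandidates Sm t (S ∩ Sm m) := by
  classical
  obtain ⟨σ, hσ, hiA, hitop⟩ := hi
  obtain ⟨hiS, him₁⟩ := Finset.mem_inter.1 hiA
  set D := (Sm m \ Sm m₁) ∩ S with hD
  obtain ⟨σ', hout, hto, -⟩ := exists_perm_move_after σ D i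
  have hiD : i ∉ D := by simp [hD, him₁]
  have hDge : ∀ m', ∀ j ∈ D, j ∈ Sm m' → m ≤ m' := by
    intro m' j hj hjm'
    by_contra! h
    simp only [hD, Finset.mem_inter, Finset.mem_sdiff] at hj
    exact hj.1.2 (hSm (hpred m' h) hjm')
  have htD : ∀ m', t m' ∉ D := by
    intro m' hm'
    have hsub := hSm (hDge m' _ hm' (hσ m').1)
    simp only [hD, Finset.mem_inter, Finset.mem_sdiff] at hm'
    have : t m = t m' :=
      σ.injective (le_antisymm ((hσ m).2 _ hm'.1.1) ((hσ m').2 _ (hsub (hσ m).1)))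
    exact htm (this ▸ hm'.2)
  refine ⟨σ', fun m' => ⟨(hσ m').1, fun j hj => ?_⟩,
    Finset.mem_inter.2 ⟨hiS, hSm hm₁.le him₁⟩, fun j hj => ?_⟩
  · by_cases hjD : j ∈ D
    · exact ((hto _ (htD m') _ hjD).2
        ((hσ m').2 i (hSm (hm₁.le.trans (hDge m' j hjD hj)) him₁))).le
    · exact (hout _ (htD m') _ hjD).2 ((hσ m').2 j hj)
  · by_cases hjD : j ∈ D
    · exact ((hto _ hiD _ hjD).2 le_rfl).le
    · have hjm₁ : j ∈ S ∩ Sm m₁ := by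
        simp only [hD, Finset.mem_inter, Finset.mem_sdiff] at hj hjD ⊢
        tauto
      exact (hout _ hiD _ hjD).2 (hitop j hjm₁)

lemma topCandidates_inter_of_notMem_of_isBot (hSm : Monotone Sm) (ht : memL Sm t)
    {S : Finset (Fin (n + 1))} {m : Fin M} (hm : IsBot m) (htm : t m ∉ S) :
    topCandidates Sm t (S ∩ Sm m) = ↑(Sm m ∩ S) := by
  obtain ⟨σ₀, hσ₀⟩ := ht
  ext i
  constructor
  · intro hi
    simpa [and_comm] using topCandidates_subset _ hi
  · intro hi
    obtain ⟨him, hiS⟩ := Finset.mem_inter.1 hi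
    exact mem_topCandidates_inter_of_forall_lt_notMem hSm hσ₀ htm hiS him
      fun m' hm' _ => (hm m').not_gt hm'

lemma topCandidates_inter_of_notMem_of_pred (hSm : Monotone Sm) (ht : memL Sm t)
    {S : Finset (Fin (n + 1))} {m₁ m : Fin M} (hm₁ : m₁ < m) (hpred : ∀ m' < m, m' ≤ m₁)
    (htm : t m ∉ S) :
    topCandidates Sm t (S ∩ Sm m) =
      topCandidates Sm t (S ∩ Sm m₁) ∪ ↑((Sm m \ Sm m₁) ∩ S) := by
  obtain ⟨σ₀, hσ₀⟩ := ht
  ext i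
  constructor
  · intro hi
    obtain ⟨hiS, him⟩ := Finset.mem_inter.1 (topCandidates_subset _ hi)
    by_cases him₁ : i ∈ Sm m₁
    · exact Or.inl (mem_topCandidates_of_subset (Finset.inter_subset_inter_left (hSm hm₁.le))
        hi (Finset.mem_inter.2 ⟨hiS, him₁⟩))
    · exact Or.inr (by simp [hiS, him, him₁])
  · rintro (hi | hi)
    · exact mem_topCandidates_inter_of_mem_topCandidates_pred hSm hm₁ hpred htm hi
    · simp only [Finset.coe_inter, Finset.coe_sdiff, Set.mem_inter_iff, Set.mem_sdiff,
        Finset.mem_coe] at hi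
      exact mem_topCandidates_inter_of_forall_lt_notMem hSm hσ₀ htm hi.2 hi.1.1
        fun m' hm' him' => hi.1.2 (hSm (hpred m' hm') him')

end

lemma csInf_union_eq_csInf_insert_csInf {α : Type*} [ConditionallyCompleteLattice α]
    {s u : Set α} (hs : BddBelow s) (hs' : s.Nonempty) (hu : BddBelow u) :
    sInf (s ∪ u) = sInf (insert (sInf s) u) := by
  rcases u.eq_empty_or_nonempty with rfl | hu'
  · simp
  · rw [csInf_union hs hs' hu hu', csInf_insert hu hu']

/-- Index `m : Fin M` stands for the paper's `S_{m+1}`: `(m : ℕ) = 0` is the paper's case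
`m = 1`, and `1 ≤ (m : ℕ)` its case `m ≥ 2`. -/
theorem statement11_general (n M : ℕ) (hM : 1 ≤ M)
    (r : Fin (n + 1) → ℝ)
    (Sm : Fin M → Finset (Fin (n + 1)))
    (hnested : ∀ m m' : Fin M, m < m' → Sm m ⊂ Sm m')
    (S : Finset (Fin (n + 1))) (hS : (S ∩ Sm ⟨0, hM⟩).Nonempty) :
    ∀ t : Fin M → Fin (n + 1), memL Sm t → ∀ m : Fin M,
      (t m ∈ S → rho Sm r t (S ∩ Sm m) = r (t m)) ∧
      (t m ∉ S → (m : ℕ) = 0 →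
        rho Sm r t (S ∩ Sm m) = sInf (r '' (↑(Sm m ∩ S) : Set (Fin (n + 1))))) ∧
      (t m ∉ S → 1 ≤ (m : ℕ) →
        rho Sm r t (S ∩ Sm m) =
          sInf (insert
            (rho Sm r t (S ∩ Sm ⟨(m : ℕ) - 1, lt_of_le_of_lt (Nat.sub_le _ _) m.isLt⟩))
            (r '' (↑((Sm m \ Sm ⟨(m : ℕ) - 1, lt_of_le_of_lt (Nat.sub_le _ _) m.isLt⟩) ∩ S) :
              Set (Fin (n + 1)))))) := by
  intro t ht m
  have hSm : Monotone Sm := StrictMono.monotone hnested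
  refine ⟨fun htm => ?_, fun htm hm => ?_, fun htm hm => ?_⟩
  · rw [rho_eq_sInf_image, topCandidates_inter_eq_singleton ht S htm, Set.image_singleton,
      csInf_singleton]
  · rw [rho_eq_sInf_image, topCandidates_inter_of_notMem_of_isBot hSm ht
      (fun m' => Fin.le_def.2 (by omega)) htm]
  · set m₁ : Fin M := ⟨(m : ℕ) - 1, lt_of_le_of_lt (Nat.sub_le _ _) m.isLt⟩
    have hm₁ : (m₁ : ℕ) = m - 1 := rfl
    have hm₁m : m₁ < m := Fin.lt_def.2 (by omega)
    have hpred : ∀ m' < m, m' ≤ m₁ := fun m' h =>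
      Fin.le_def.2 (by have := Fin.lt_def.1 h; omega)
    have hS₁ : (S ∩ Sm m₁).Nonempty :=
      hS.mono (Finset.inter_subset_inter_left (hSm (Fin.le_def.2 (Nat.zero_le _))))
    rw [rho_eq_sInf_image, rho_eq_sInf_image,
      topCandidates_inter_of_notMem_of_pred hSm ht hm₁m hpred htm, Set.image_union]
    exact csInf_union_eq_csInf_insert_csInf ((Set.toFinite _).image r).bddBelow
      ((topCandidates_nonempty ht hS₁).image r) (Set.toFinite _).bddBelow

/-- Lemma 11 of the paper: recursive formula for `ρ_{i_1⋯i_M}(S ∩ S_m)` when the past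
assortments are nested. (Index `m : Fin M` corresponds to the paper's assortment `S_{m+1}`;
in particular `(m : ℕ) = 0` is the paper's case `m = 1` with `B_1 = S_1`, and `1 ≤ (m : ℕ)`
is the paper's case `m ≥ 2` with `B_m = S_m \ S_{m-1}`.) -/
theorem statement11 (n M : ℕ) (hn : 1 ≤ n) (hM : 1 ≤ M)
    (r : Fin (n + 1) → ℝ) (hr0 : r 0 = 0) (hr : StrictMono r)
    (Sm : Fin M → Finset (Fin (n + 1))) (hSm0 : ∀ m, (0 : Fin (n + 1)) ∈ Sm m)
    (hnested : ∀ m m' : Fin M, m < m' → Sm m ⊂ Sm m')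
    (S : Finset (Fin (n + 1))) (hS : (S ∩ Sm ⟨0, hM⟩).Nonempty) :
    ∀ t : Fin M → Fin (n + 1), memL Sm t → ∀ m : Fin M,
      (t m ∈ S → rho Sm r t (S ∩ Sm m) = r (t m)) ∧
      (t m ∉ S → (m : ℕ) = 0 →
        rho Sm r t (S ∩ Sm m) = sInf (r '' (↑(Sm m ∩ S) : Set (Fin (n + 1))))) ∧
      (t m ∉ S → 1 ≤ (m : ℕ) →
        rho Sm r t (S ∩ Sm m) =
          sInf (insert
            (rho Sm r t (S ∩ Sm ⟨(m : ℕ) - 1, lt_of_le_of_lt (Nat.sub_le _ _) m.isLt⟩))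
            (r '' (↑((Sm m \ Sm ⟨(m : ℕ) - 1, lt_of_le_of_lt (Nat.sub_le _ _) m.isLt⟩) ∩ S) :
              Set (Fin (n + 1)))))) :=
  statement11_general n M hM r Sm hnested S hS

end RobustAssortment
end
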